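/- arXiv:2111.05908 — 4 statements merged into one kernel-verified Lean document; each statement's English description precedes it below -/
import Mathlib

section
/- Let G be a finite connected simple graph that is not weakly f-degenerate for the function f(u) = deg_G(u) − 1. Then for every subset A ⊆ V(G) such that the induced subgraph G[A] is connected and has no cut vertex, the graph G[A] is regular. -/
open scoped Classical

namespace WeakDeg

variable {V : Type*}

/-- `WeakDegenOn G S f` means: starting from the induced subgraph `G[S]` of `G` with value
function `f`, it is possible to remove all vertices by a sequence of legal applications of the
operations `Delete` and `DelSave`. `Delete(u)` removes `u` and decreases by one the value of
every remaining neighbor of `u`; it is legal if the resulting function is nonnegative on the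
remaining vertices. `DelSave(u, w)` (for `w` a neighbor of `u` with `f w < f u`) removes `u` and
decreases by one the value of every remaining neighbor of `u` except `w`; it is legal if
`f w < f u` and the resulting function is nonnegative on the remaining vertices. -/
inductive WeakDegenOn (G : SimpleGraph V) : Finset V → (V → ℤ) → Prop
  | empty (f : V → ℤ) : WeakDegenOn G ∅ f
  | delete (S : Finset V) (f : V → ℤ) (u : V) (hu : u ∈ S)
      (hleg : ∀ v ∈ S.erase u, 0 ≤ if G.Adj u v then f v - 1 else f v)
      (h : WeakDegenOn G (S.erase u) fun v => if G.Adj u v then f v - 1 else f v) :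
      WeakDegenOn G S f
  | delSave (S : Finset V) (f : V → ℤ) (u w : V) (hu : u ∈ S) (hw : w ∈ S)
      (hadj : G.Adj u w) (hlt : f w < f u)
      (hleg : ∀ v ∈ S.erase u, 0 ≤ if G.Adj u v ∧ v ≠ w then f v - 1 else f v)
      (h : WeakDegenOn G (S.erase u) fun v => if G.Adj u v ∧ v ≠ w then f v - 1 else f v) :
      WeakDegenOn G S f

/-- `G` is weakly `f`-degenerate, for `f : V → ℕ`. -/
def WeaklyDegenerateWith (G : SimpleGraph V) [Fintype V] (f : V → ℕ) : Prop :=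
  WeakDegenOn G Finset.univ fun v => (f v : ℤ)

/-- `G` is weakly `d`-degenerate. -/
def WeaklyDegenerate (G : SimpleGraph V) [Fintype V] (d : ℕ) : Prop :=
  WeaklyDegenerateWith G fun _ => d

/-- The weak degeneracy `wd(G)` of `G`: the least `d` such that `G` is weakly `d`-degenerate. -/
noncomputable def weakDegeneracy (G : SimpleGraph V) [Fintype V] : ℕ :=
  sInf {d : ℕ | WeaklyDegenerate G d}

/-- `v` is a cut vertex of the graph `H`: `H` is connected and removing `v` disconnects it. -/
def IsCutVertex {W : Type*} (H : SimpleGraph W) (v : W) : Prop :=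
  H.Connected ∧ ¬ (H.induce {u | u ≠ v}).Preconnected

/-- `B` is a block of `G`: a maximal set of vertices inducing a connected subgraph
without a cut vertex. -/
def IsBlock (G : SimpleGraph V) (B : Set V) : Prop :=
  ((G.induce B).Connected ∧ ∀ v, ¬ IsCutVertex (G.induce B) v) ∧
    ∀ A : Set V, B ⊆ A → ((G.induce A).Connected ∧ ∀ v, ¬ IsCutVertex (G.induce A) v) → A = B

/-- `H` is a cycle graph: a connected `2`-regular graph (on a finite vertex type). -/
def IsCycleGraph {W : Type*} (H : SimpleGraph W) : Prop :=
  H.Connected ∧ ∀ v, (H.neighborSet v).ncard = 2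

/-- `G` is a GDP-tree: a connected graph every block of which is a clique or a cycle. -/
def IsGDPTree (G : SimpleGraph V) : Prop :=
  G.Connected ∧ ∀ B : Set V, IsBlock G B → G.IsClique B ∨ IsCycleGraph (G.induce B)

theorem WeakDegenOn.congr {G : SimpleGraph V} {S : Finset V} {f : V → ℤ}
    (h : WeakDegenOn G S f) : ∀ {g : V → ℤ}, (∀ v ∈ S, f v = g v) → WeakDegenOn G S g := by
  induction h with
  | empty f => intro g _; exact .empty g
  | delete S f u hu hleg h ih =>
    intro g hfg
    refine .delete S g u hu (fun v hv => ?_) (ih fun v hv => ?_)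
    · rw [← hfg v (Finset.mem_of_mem_erase hv)]; exact hleg v hv
    · dsimp only; rw [hfg v (Finset.mem_of_mem_erase hv)]
  | delSave S f u w hu hw hadj hlt hleg h ih =>
    intro g hfg
    refine .delSave S g u w hu hw hadj ?_ (fun v hv => ?_) (ih fun v hv => ?_)
    · rw [← hfg w hw, ← hfg u hu]; exact hlt
    · rw [← hfg v (Finset.mem_of_mem_erase hv)]; exact hleg v hv
    · dsimp only; rw [hfg v (Finset.mem_of_mem_erase hv)]

/-- number of neighbors of `v` inside `S`. -/
noncomputable def degIn (G : SimpleGraph V) (S : Finset V) (v : V) : ℕ :=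
  (S.filter (G.Adj v)).card

lemma degIn_mono {G : SimpleGraph V} {S T : Finset V} (h : S ⊆ T) (v : V) :
    degIn G S v ≤ degIn G T v :=
  Finset.card_le_card (Finset.filter_subset_filter _ h)

lemma degIn_erase {G : SimpleGraph V} {S : Finset V} {u : V} (hu : u ∈ S) (v : V) (hvu : v ≠ u) :
    (degIn G (S.erase u) v : ℤ) = degIn G S v - (if G.Adj u v then 1 else 0) := by
  classical
  unfold degIn
  rw [Finset.filter_erase]
  by_cases h : G.Adj u v
  · rw [if_pos h, Finset.card_erase_of_mem (Finset.mem_filter.2 ⟨hu, h.symm⟩)]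
    have h1 : 1 ≤ (S.filter (G.Adj v)).card :=
      Finset.card_pos.2 ⟨u, Finset.mem_filter.2 ⟨hu, h.symm⟩⟩
    omega
  · rw [if_neg h, Finset.erase_eq_of_notMem, sub_zero]
    intro hmem
    exact h ((Finset.mem_filter.1 hmem).2.symm)

lemma degIn_lt_of_adj {G : SimpleGraph V} {S A : Finset V} (hAS : A ⊆ S) {u v : V}
    (hu : u ∈ S) (huA : u ∉ A) (hadj : G.Adj v u) :
    degIn G A v < degIn G S v := by
  classical
  apply Finset.card_lt_card
  constructor
  · exact Finset.filter_subset_filter _ hAS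
  · intro hsub
    exact huA (Finset.mem_filter.1 (hsub (Finset.mem_filter.2 ⟨hu, hadj⟩))).1

/-- Possible lengths of walks from `v` to `A` staying inside `S`. -/
def lengthsTo (G : SimpleGraph V) (S A : Finset V) (v : V) : Set ℕ :=
  {n | ∃ a ∈ A, ∃ p : G.Walk v a, (∀ x ∈ p.support, x ∈ S) ∧ p.length = n}

noncomputable def dTo (G : SimpleGraph V) (S A : Finset V) (v : V) : ℕ :=
  sInf (lengthsTo G S A v)

theorem LGen (G : SimpleGraph V) (A : Finset V) :
    ∀ (n : ℕ) (S : Finset V) (f : V → ℤ), (S \ A).card = n → A ⊆ S →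
    (∀ v ∈ S, ∃ a ∈ A, ∃ p : G.Walk v a, ∀ x ∈ p.support, x ∈ S) →
    (∀ v ∈ S, v ∉ A → (degIn G S v : ℤ) - 1 ≤ f v) →
    (∀ v ∈ A, 0 ≤ f v - ((degIn G S v : ℤ) - degIn G A v)) →
    WeakDegenOn G A (fun v => f v - ((degIn G S v : ℤ) - degIn G A v)) →
    WeakDegenOn G S f := by
  classical
  intro n
  induction n with
  | zero =>
    intro S f hcard hAS _ _ _ hcont
    have hSA : S = A := le_antisymm (Finset.sdiff_eq_empty_iff_subset.1
      (Finset.card_eq_zero.1 hcard)) hAS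
    subst hSA
    exact hcont.congr fun v _ => by ring
  | succ n ih =>
    intro S f hcard hAS hreach hf hA hcont
    have hne : (S \ A).Nonempty := Finset.card_pos.1 (by omega)
    obtain ⟨u, huSA, humax⟩ := Finset.exists_max_image (S \ A) (dTo G S A) hne
    have huS : u ∈ S := (Finset.mem_sdiff.1 huSA).1
    have huA : u ∉ A := (Finset.mem_sdiff.1 huSA).2
    -- after erasing u, every remaining vertex still reaches A within S.erase u
    have hreach' : ∀ v ∈ S.erase u, ∃ a ∈ A, ∃ p : G.Walk v a,
        ∀ x ∈ p.support, x ∈ S.erase u := by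
      intro v hv
      have hvS : v ∈ S := Finset.mem_of_mem_erase hv
      have hvu : v ≠ u := Finset.ne_of_mem_erase hv
      have hnonempty : (lengthsTo G S A v).Nonempty := by
        obtain ⟨a, ha, p, hp⟩ := hreach v hvS
        exact ⟨p.length, a, ha, p, hp, rfl⟩
      obtain ⟨a, ha, p, hp, hlen⟩ := Nat.sInf_mem hnonempty
      by_cases hup : u ∈ p.support
      · exfalso
        have hua : u ≠ a := fun h => huA (h ▸ ha)
        -- the suffix from u is a strictly shorter S-walk to A
        have hdrop : (p.dropUntil u hup).length < p.length := by
          have hspec := SimpleGraph.Walk.take_spec p hup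
          have hlen2 : (p.takeUntil u hup).length + (p.dropUntil u hup).length = p.length := by
            rw [← SimpleGraph.Walk.length_append, hspec]
          have htpos : 0 < (p.takeUntil u hup).length := by
            rcases Nat.eq_zero_or_pos (p.takeUntil u hup).length with h0 | h
            · exfalso
              have := (SimpleGraph.Walk.eq_of_length_eq_zero h0 : v = u)
              exact hvu this
            · exact h
          omega
        have hdu : dTo G S A u ≤ (p.dropUntil u hup).length :=
          Nat.sInf_le ⟨a, ha, p.dropUntil u hup,
            fun x hx => hp x (SimpleGraph.Walk.support_dropUntil_subset p hup hx), rfl⟩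
        have hdv : dTo G S A v = p.length := hlen.symm
        have : dTo G S A u < dTo G S A v := by omega
        -- but v is either in A (then dTo v = 0, so p = nil, contradiction) or maximality fails
        by_cases hvA : v ∈ A
        · have h0 : dTo G S A v = 0 :=
            Nat.le_antisymm (Nat.sInf_le ⟨v, hvA, SimpleGraph.Walk.nil, by
              simp [hvS], rfl⟩) (Nat.zero_le _)
          omega
        · have := humax v (Finset.mem_sdiff.2 ⟨hvS, hvA⟩)
          omega
      · exact ⟨a, ha, p, fun x hx => Finset.mem_erase.2 ⟨fun h => hup (h ▸ hx), hp x hx⟩⟩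
    refine WeakDegenOn.delete S f u huS ?_ ?_
    · -- legality
      intro v hv
      have hvS : v ∈ S := Finset.mem_of_mem_erase hv
      have hvu : v ≠ u := Finset.ne_of_mem_erase hv
      by_cases hvA : v ∈ A
      · have h1 := hA v hvA
        have h2 : (degIn G A v : ℤ) ≤ degIn G (S.erase u) v := by
          exact_mod_cast degIn_mono (fun x hx =>
            Finset.mem_erase.2 ⟨fun h => huA (by rwa [h] at hx), hAS hx⟩) v
        have h3 := degIn_erase (G := G) huS v hvu
        split <;> rename_i hadj
        · rw [if_pos hadj] at h3; omega
        · rw [if_neg hadj] at h3; omega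
      · have h1 := hf v hvS hvA
        have h3 := degIn_erase (G := G) huS v hvu
        -- v has a neighbor in S.erase u
        obtain ⟨a, ha, p, hp⟩ := hreach' v hv
        have hva : v ≠ a := fun h => hvA (h ▸ ha)
        have hdeg1 : 1 ≤ degIn G (S.erase u) v := by
          cases p with
          | nil => exact absurd rfl hva
          | cons hadj q =>
            rename_i c
            refine Finset.card_pos.2 ⟨c, Finset.mem_filter.2 ⟨hp c ?_, hadj⟩⟩
            simp [SimpleGraph.Walk.support_cons]
        split <;> rename_i hadj
        · rw [if_pos hadj] at h3; omega
        · rw [if_neg hadj] at h3; omega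
    · -- recursive call
      refine ih (S.erase u) _ ?_ (fun x hx => Finset.mem_erase.2
        ⟨fun h => huA (by rwa [h] at hx), hAS hx⟩) hreach' ?_ ?_ ?_
      · have : (S.erase u) \ A = (S \ A).erase u := by
          ext x; simp [Finset.mem_erase, Finset.mem_sdiff]; tauto
        rw [this, Finset.card_erase_of_mem huSA]; omega
      · intro v hv hvA
        have hvS : v ∈ S := Finset.mem_of_mem_erase hv
        have hvu : v ≠ u := Finset.ne_of_mem_erase hv
        have h1 := hf v hvS hvA
        have h3 := degIn_erase (G := G) huS v hvu
        beta_reduce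
        split <;> rename_i hadj
        · rw [if_pos hadj] at h3; omega
        · rw [if_neg hadj] at h3; omega
      · intro v hvA
        have hvu : v ≠ u := fun h => huA (h ▸ hvA)
        have h1 := hA v hvA
        have h3 := degIn_erase (G := G) huS v hvu
        beta_reduce
        have h2 : (degIn G A v : ℤ) + (if G.Adj u v then 1 else 0) ≤ degIn G S v := by
          by_cases hadj : G.Adj u v
          · rw [if_pos hadj]
            have := degIn_lt_of_adj hAS huS huA hadj.symm (v := v)
            omega
          · rw [if_neg hadj]
            have : degIn G A v ≤ degIn G S v := degIn_mono hAS v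
            omega
        split <;> rename_i hadj
        · rw [if_pos hadj] at h3; omega
        · rw [if_neg hadj] at h3; omega
      · refine hcont.congr fun v hvA => ?_
        have hvu : v ≠ u := fun h => huA (h ▸ hvA)
        have h3 := degIn_erase (G := G) huS v hvu
        beta_reduce
        split <;> rename_i hadj
        · rw [if_pos hadj] at h3; omega
        · rw [if_neg hadj] at h3; omega

lemma walk_induce {G : SimpleGraph V} {s : Set V} {a b : ↥s} (p : (G.induce s).Walk a b) :
    ∃ q : G.Walk (a : V) (b : V), q.support = p.support.map Subtype.val := by
  induction p with
  | nil => exact ⟨SimpleGraph.Walk.nil, rfl⟩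
  | cons h p ih =>
    obtain ⟨q, hq⟩ := ih
    exact ⟨SimpleGraph.Walk.cons h q, congrArg (List.cons _) hq⟩

/-- In a connected graph with at least two vertices, every vertex has a neighbor. -/
lemma exists_adj_of_connected {G : SimpleGraph V} (h : G.Connected) {v w : V} (hvw : v ≠ w) :
    ∃ x, G.Adj v x := by
  obtain ⟨p⟩ := h.preconnected v w
  cases p with
  | nil => exact absurd rfl hvw
  | cons hadj q => exact ⟨_, hadj⟩

lemma degIn_univ [Fintype V] (G : SimpleGraph V) [DecidableRel G.Adj] (v : V) :
    degIn G Finset.univ v = G.degree v := by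
  unfold degIn
  rw [SimpleGraph.degree, SimpleGraph.neighborFinset_eq_filter]
  congr 1
  exact Finset.filter_congr_decidable _ _ _

lemma ncard_neighborSet_eq_degIn [Fintype V] (G : SimpleGraph V) (A : Set V) (u : ↥A) :
    ((G.induce A).neighborSet u).ncard = degIn G A.toFinset (u : V) := by
  rw [← Set.ncard_image_of_injective _ (Subtype.val_injective (p := fun x => x ∈ A))]
  have himg : (Subtype.val '' ((G.induce A).neighborSet u)) =
      ↑(A.toFinset.filter (G.Adj (u : V))) := by
    ext x
    simp only [Set.mem_image, SimpleGraph.mem_neighborSet, Finset.coe_filter,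
      Set.mem_setOf_eq, Set.mem_toFinset]
    constructor
    · rintro ⟨w, hw, rfl⟩
      exact ⟨w.2, hw⟩
    · rintro ⟨hx, hadj⟩
      exact ⟨⟨x, hx⟩, hadj, rfl⟩
  rw [himg, Set.ncard_coe_finset]
  rfl

lemma exists_adj_ne_along_walk {W : Type*} (H : SimpleGraph W) (h : W → ℕ) :
    ∀ {a b : W}, H.Walk a b → h a ≠ h b → ∃ x y, H.Adj x y ∧ h x ≠ h y := by
  intro a b p
  induction p with
  | nil => intro hne; exact absurd rfl hne
  | @cons c d e hadj q ih =>
    intro hne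
    by_cases hcd : h c = h d
    · obtain ⟨x, y, hxy, hne'⟩ := ih (hcd ▸ hne)
      exact ⟨x, y, hxy, hne'⟩
    · exact ⟨c, d, hadj, hcd⟩

lemma walk_double_induce {G : SimpleGraph V} {A : Set V} {x : ↥A}
    (hpre : ((G.induce A).induce {u | u ≠ x}).Preconnected) {v z : V}
    (hv : v ∈ A) (hz : z ∈ A) (hvx : v ≠ (x : V)) (hzx : z ≠ (x : V)) :
    ∃ p : G.Walk v z, ∀ c ∈ p.support, c ∈ A ∧ c ≠ (x : V) := by
  have hv' : (⟨v, hv⟩ : ↥A) ≠ x := fun h => hvx (congrArg Subtype.val h)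
  have hz' : (⟨z, hz⟩ : ↥A) ≠ x := fun h => hzx (congrArg Subtype.val h)
  obtain ⟨p⟩ := hpre ⟨⟨v, hv⟩, hv'⟩ ⟨⟨z, hz⟩, hz'⟩
  obtain ⟨q, hq⟩ := walk_induce p
  obtain ⟨r, hr⟩ := walk_induce q
  refine ⟨r, fun c hc => ?_⟩
  rw [hr] at hc
  obtain ⟨cc, hcc, rfl⟩ := List.mem_map.1 hc
  refine ⟨cc.2, ?_⟩
  rw [hq] at hcc
  obtain ⟨ccc, hccc, rfl⟩ := List.mem_map.1 hcc
  exact fun h => ccc.2 (Subtype.val_injective h)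

lemma two_le_degIn [Fintype V] {G : SimpleGraph V} {A : Set V}
    (hA : (G.induce A).Connected) (hnc : ∀ v, ¬ IsCutVertex (G.induce A) v)
    (hcard : 3 ≤ A.toFinset.card) : ∀ v ∈ A.toFinset, 2 ≤ degIn G A.toFinset v := by
  classical
  intro v hv
  have hvA : v ∈ A := Set.mem_toFinset.1 hv
  -- degree at least 1
  obtain ⟨w, hw, hwv⟩ := Finset.exists_mem_ne (s := A.toFinset) (by omega) v
  have hwA : w ∈ A := Set.mem_toFinset.1 hw
  have hne : (⟨v, hvA⟩ : ↥A) ≠ ⟨w, hwA⟩ := fun h => hwv (congrArg Subtype.val h).symm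
  obtain ⟨x1, hx1⟩ := exists_adj_of_connected hA hne
  have h1 : 1 ≤ degIn G A.toFinset v :=
    Finset.card_pos.2 ⟨(x1 : V), Finset.mem_filter.2 ⟨Set.mem_toFinset.2 x1.2, hx1⟩⟩
  by_contra hlt
  have hdeg1 : degIn G A.toFinset v = 1 := by omega
  obtain ⟨w0, hw0⟩ := Finset.card_eq_one.1 hdeg1
  have hw0mem : w0 ∈ A.toFinset.filter (G.Adj v) := hw0 ▸ Finset.mem_singleton_self w0
  have hw0A : w0 ∈ A := Set.mem_toFinset.1 (Finset.mem_filter.1 hw0mem).1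
  have hvw0 : G.Adj v w0 := (Finset.mem_filter.1 hw0mem).2
  refine hnc ⟨w0, hw0A⟩ ⟨hA, fun hpre => ?_⟩
  -- pick a third vertex z
  have hz : (A.toFinset \ {v, w0}).Nonempty := by
    rw [← Finset.card_pos]
    have h2 : ({v, w0} : Finset V).card ≤ 2 := Finset.card_insert_le v {w0}
    have h3 := Finset.le_card_sdiff ({v, w0} : Finset V) A.toFinset
    omega
  obtain ⟨z, hzmem⟩ := hz
  have hzA : z ∈ A := Set.mem_toFinset.1 (Finset.mem_sdiff.1 hzmem).1
  have hzv : z ≠ v := fun h => (Finset.mem_sdiff.1 hzmem).2 (by simp [h])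
  have hzw0 : z ≠ w0 := fun h => (Finset.mem_sdiff.1 hzmem).2 (by simp [h])
  obtain ⟨p, hsup⟩ := walk_double_induce (x := ⟨w0, hw0A⟩) hpre hvA hzA hvw0.ne hzw0
  cases p with
  | nil => exact hzv rfl
  | @cons _ c _ hadj q =>
    have hc := hsup c (by
      rw [SimpleGraph.Walk.support_cons]
      exact List.mem_cons_of_mem _ q.start_mem_support)
    have : c ∈ A.toFinset.filter (G.Adj v) :=
      Finset.mem_filter.2 ⟨Set.mem_toFinset.2 hc.1, hadj⟩
    rw [hw0] at this
    exact hc.2 (Finset.mem_singleton.1 this)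

lemma one_le_degIn {G : SimpleGraph V} {S : Finset V} {v w : V} (hw : w ∈ S) (h : G.Adj v w) :
    1 ≤ degIn G S v :=
  Finset.card_pos.2 ⟨w, Finset.mem_filter.2 ⟨hw, h⟩⟩

lemma exists_pair_adj_of_two_le_degIn {G : SimpleGraph V} {S : Finset V} {v : V}
    (h : 2 ≤ degIn G S v) :
    ∃ a b, a ∈ S ∧ b ∈ S ∧ a ≠ b ∧ G.Adj v a ∧ G.Adj v b := by
  obtain ⟨a, ha, b, hb, hab⟩ := Finset.one_lt_card.1 (by omega : 1 < degIn G S v)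
  exact ⟨a, b, (Finset.mem_filter.1 ha).1, (Finset.mem_filter.1 hb).1, hab,
    (Finset.mem_filter.1 ha).2, (Finset.mem_filter.1 hb).2⟩

lemma degIn_singleton_self (G : SimpleGraph V) (y : V) : degIn G {y} y = 0 := by
  unfold degIn
  rw [Finset.filter_singleton, if_neg G.irrefl]
  exact Finset.card_empty

/-- If a connected graph `G` is not weakly `(deg - 1)`-degenerate, then every connected induced
subgraph of `G` without cut vertices is regular. -/
theorem regular_of_not_weaklyDegenerate_degMinusOne {V : Type*} [Fintype V] (G : SimpleGraph V)
    [DecidableRel G.Adj] (hconn : G.Connected)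
    (hnot : ¬ ((∀ v, (0 : ℤ) ≤ (G.degree v : ℤ) - 1) ∧
      WeakDegenOn G Finset.univ fun v => (G.degree v : ℤ) - 1))
    (A : Set V) (hA : (G.induce A).Connected)
    (hnc : ∀ v, ¬ IsCutVertex (G.induce A) v) :
    ∀ u v : A, ((G.induce A).neighborSet u).ncard = ((G.induce A).neighborSet v).ncard := by
  classical
  by_contra hreg
  push_neg at hreg
  obtain ⟨u0, v0, hne0⟩ := hreg
  rw [ncard_neighborSet_eq_degIn, ncard_neighborSet_eq_degIn] at hne0
  have key : ∀ (x0 y0 : ↥A), (G.induce A).Adj x0 y0 →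
      degIn G A.toFinset (y0 : V) < degIn G A.toFinset (x0 : V) → False := by
    intro x0 y0 hxy hlt
    set x : V := (x0 : V) with hxdef
    set y : V := (y0 : V) with hydef
    have hxy' : G.Adj x y := hxy
    have hxAf : x ∈ A.toFinset := Set.mem_toFinset.2 x0.2
    have hyAf : y ∈ A.toFinset := Set.mem_toFinset.2 y0.2
    have hy1 : 1 ≤ degIn G A.toFinset y := one_le_degIn hxAf hxy'.symm
    have hx2 : 2 ≤ degIn G A.toFinset x := by omega
    -- at least three vertices in A
    have hcard3 : 3 ≤ A.toFinset.card := by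
      obtain ⟨a, b, haf, hbf, hab, hva, hvb⟩ := exists_pair_adj_of_two_le_degIn hx2
      have hax : a ≠ x := fun h => G.irrefl (h ▸ hva)
      have hbx : b ≠ x := fun h => G.irrefl (h ▸ hvb)
      have hsub : ({x, a, b} : Finset V) ⊆ A.toFinset := by
        intro t ht
        rcases Finset.mem_insert.1 ht with rfl | ht
        · exact hxAf
        · rcases Finset.mem_insert.1 ht with rfl | ht
          · exact haf
          · rw [Finset.mem_singleton.1 ht]; exact hbf
      have h3 : ({x, a, b} : Finset V).card = 3 := by
        rw [Finset.card_insert_of_notMem (by simp [hax.symm, hbx.symm] : x ∉ ({a, b} : Finset V)),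
          Finset.card_insert_of_notMem (by simp [hab] : a ∉ ({b} : Finset V)),
          Finset.card_singleton]
      calc 3 = ({x, a, b} : Finset V).card := h3.symm
        _ ≤ A.toFinset.card := Finset.card_le_card hsub
    have hmin2 := two_le_degIn hA hnc hcard3
    -- every vertex of G has a neighbor
    have hP : ∀ v, (0 : ℤ) ≤ (G.degree v : ℤ) - 1 := by
      intro v
      obtain ⟨z, _, hzv⟩ := Finset.exists_mem_ne (s := A.toFinset) (by omega) v
      obtain ⟨c, hc⟩ := exists_adj_of_connected hconn hzv.symm
      have : 0 < G.degree v := G.degree_pos_iff_exists_adj v |>.2 ⟨c, hc⟩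
      push_cast
      omega
    have hyx : y ≠ x := fun h => G.irrefl (h ▸ hxy')
    have hprex : ((G.induce A).induce {u | u ≠ x0}).Preconnected := by
      by_contra hnp
      exact hnc x0 ⟨hA, hnp⟩
    have hreach2 : ∀ v ∈ A.toFinset.erase x, ∃ a ∈ ({y} : Finset V), ∃ p : G.Walk v a,
        ∀ t ∈ p.support, t ∈ A.toFinset.erase x := by
      intro v hv
      have hvA : v ∈ A := Set.mem_toFinset.1 (Finset.mem_of_mem_erase hv)
      have hvx : v ≠ x := Finset.ne_of_mem_erase hv
      obtain ⟨p, hp⟩ := walk_double_induce (x := x0) hprex hvA y0.2 hvx hyx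
      exact ⟨y, Finset.mem_singleton_self y, p, fun t ht =>
        Finset.mem_erase.2 ⟨(hp t ht).2, Set.mem_toFinset.2 (hp t ht).1⟩⟩
    have hdegy0 : degIn G ({y} : Finset V) y = 0 := degIn_singleton_self G y
    -- Phase 2
    have phase2 : WeakDegenOn G A.toFinset (fun v => (degIn G A.toFinset v : ℤ) - 1) := by
      refine WeakDegenOn.delSave A.toFinset _ x y hxAf hyAf hxy' (by push_cast; omega) ?_ ?_
      · intro v hv
        have h2 := hmin2 v (Finset.mem_of_mem_erase hv)
        split <;> push_cast <;> omega
      · refine LGen G {y} _ (A.toFinset.erase x) _ rfl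
          (Finset.singleton_subset_iff.2 (Finset.mem_erase.2 ⟨hyx, hyAf⟩)) hreach2 ?_ ?_ ?_
        · intro v hv hvy
          have hvx : v ≠ x := Finset.ne_of_mem_erase hv
          have h3 := degIn_erase (G := G) hxAf v hvx
          have hvy' : v ≠ y := fun h => hvy (Finset.mem_singleton.2 h)
          split <;> rename_i hcond
          · rw [if_pos hcond.1] at h3; omega
          · have hnadj : ¬ G.Adj x v := fun h => hcond ⟨h, hvy'⟩
            rw [if_neg hnadj] at h3; omega
        · intro v hv
          rw [Finset.mem_singleton] at hv
          subst hv
          have h3 := degIn_erase (G := G) hxAf y hyx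
          rw [if_pos hxy'] at h3
          rw [if_neg (by simp : ¬ (G.Adj x y ∧ y ≠ y)), hdegy0]
          omega
        · refine WeakDegenOn.delete {y} _ y (Finset.mem_singleton_self y) ?_ ?_
          · intro v hv
            rw [Finset.erase_singleton] at hv
            exact absurd hv (Finset.notMem_empty v)
          · rw [Finset.erase_singleton]
            exact WeakDegenOn.empty _
    -- Phase 1
    have phase1 : WeakDegenOn G Finset.univ (fun v => (G.degree v : ℤ) - 1) := by
      refine LGen G A.toFinset _ Finset.univ _ rfl (Finset.subset_univ _) ?_ ?_ ?_ ?_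
      · intro v _
        obtain ⟨p⟩ := hconn.preconnected v x
        exact ⟨x, hxAf, p, fun t _ => Finset.mem_univ t⟩
      · intro v _ _
        rw [degIn_univ]
      · intro v hvAf
        have h2 := hmin2 v hvAf
        rw [degIn_univ]
        push_cast
        omega
      · refine phase2.congr fun v hvAf => ?_
        rw [degIn_univ]
        ring
    exact hnot ⟨hP, phase1⟩
  obtain ⟨p0⟩ := hA.preconnected u0 v0
  obtain ⟨x0, y0, hxy0, hdne⟩ :=
    exists_adj_ne_along_walk (G.induce A) (fun w => degIn G A.toFinset (w : V)) p0 hne0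
  rcases lt_or_gt_of_ne hdne with hlt | hlt
  · exact key y0 x0 hxy0.symm hlt
  · exact key x0 y0 hxy0 hlt

end WeakDeg
end

section
/- Let G be a minimal graph of weak degeneracy d, where d ≥ 3; that is, wd(G) = d and wd(H) < d for every proper subgraph H of G. Then the minimum degree of G is at least d. -/
open scoped Classical

namespace WeakDeg

variable {V : Type*}

/-! If a vertex `v` had degree less than `d`, then `G - v`, a proper subgraph, would be weakly
`(d - 1)`-degenerate. Running its removal sequence inside `G` and removing `v` last, the value
`d - 1 ≥ deg v` of `v` drops by at most one per removed neighbour and stays nonnegative, so `G`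
itself would be weakly `(d - 1)`-degenerate, contradicting `wd(G) = d`. -/

open Finset

theorem card_filter_adj_erase_le {G : SimpleGraph V} {S : Finset V} {v u : V} (hu : u ∈ S)
    {a : ℤ} (h : #(S.filter (G.Adj v)) ≤ a) :
    #((S.erase u).filter (G.Adj v)) ≤ if G.Adj u v then a - 1 else a := by
  rw [filter_erase]
  split_ifs with huv
  · have := card_erase_add_one (mem_filter.2 ⟨hu, huv.symm⟩)
    omega
  · have := card_erase_le (s := S.filter (G.Adj v)) (a := u)
    omega

namespace WeakDegenOn

variable {W : Type*} {G : SimpleGraph V} {S : Finset V} {f g : V → ℤ}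

theorem mono (h : WeakDegenOn G S f) (hfg : ∀ x ∈ S, f x ≤ g x) : WeakDegenOn G S g := by
  induction h generalizing g with
  | empty f => exact .empty g
  | delete S f u hu hleg h ih =>
    refine .delete S g u hu (fun x hx => ?_) (ih fun x hx => ?_) <;>
    · have := hfg x (mem_of_mem_erase hx)
      have := hleg x hx
      beta_reduce
      split_ifs at * <;> omega
  | delSave S f u w hu hw hadj hlt hleg h ih =>
    have hfw : 0 ≤ f w := by simpa using hleg w (mem_erase.2 ⟨hadj.ne', hw⟩)
    have hgu := hfg u hu
    by_cases hlt' : g w < g u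
    · refine .delSave S g u w hu hw hadj hlt' (fun x hx => ?_) (ih fun x hx => ?_) <;>
      · have := hfg x (mem_of_mem_erase hx)
        have := hleg x hx
        beta_reduce
        split_ifs at * <;> omega
    -- Saving `w` is no longer legal, but `g w ≥ g u > f w` leaves room to decrease `g w` as well.
    · refine .delete S g u hu (fun x hx => ?_) (ih fun x hx => ?_) <;>
      · have hgx := hfg x (mem_of_mem_erase hx)
        have hlegx := hleg x hx
        beta_reduce
        by_cases hxw : x = w
        · subst hxw; simp only [hadj, if_true, ne_eq, not_true, and_false, if_false]; omega
        · simp only [hxw, ne_eq, not_false_eq_true, and_true] at hlegx ⊢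
          split_ifs at * <;> omega

theorem map {H : SimpleGraph W} (φ : H ↪g G) {S : Finset W} (h : WeakDegenOn H S (g ∘ φ)) :
    WeakDegenOn G (S.map φ.toEmbedding) g := by
  generalize hf : g ∘ φ = f at h
  induction h generalizing g with
  | empty f => exact .empty g
  | delete S f u hu hleg h ih =>
    subst hf
    have herase : (S.map φ.toEmbedding).erase (φ u) = (S.erase u).map φ.toEmbedding :=
      (map_erase ..).symm
    refine .delete _ g (φ u) (mem_map_of_mem _ hu) ?_ ?_
    · rw [herase, forall_mem_map]
      simpa using hleg
    · exact herase ▸ ih (by ext; simp)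
  | delSave S f u w hu hw hadj hlt hleg h ih =>
    subst hf
    have herase : (S.map φ.toEmbedding).erase (φ u) = (S.erase u).map φ.toEmbedding :=
      (map_erase ..).symm
    refine .delSave _ g (φ u) (φ w) (mem_map_of_mem _ hu) (mem_map_of_mem _ hw)
      (φ.map_adj_iff.2 hadj) hlt ?_ ?_
    · rw [herase, forall_mem_map]
      simpa using hleg
    · exact herase ▸ ih (by ext; simp)

theorem insert {v : V} (h : WeakDegenOn G S f) (hv : v ∉ S)
    (hdeg : #(S.filter (G.Adj v)) ≤ f v) : WeakDegenOn G (insert v S) f := by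
  induction h with
  | empty f => exact .delete _ f v (mem_singleton_self v) (by simp) (by simpa using .empty _)
  | delete S f u hu hleg h ih =>
    have hdeg' := card_filter_adj_erase_le hu hdeg
    have huv : u ≠ v := fun huv => hv (huv ▸ hu)
    refine .delete _ f u (mem_insert_of_mem hu) ?_ ?_ <;> rw [erase_insert_of_ne huv.symm]
    · exact forall_mem_insert .. |>.2 ⟨(Int.natCast_nonneg _).trans hdeg', hleg⟩
    · exact ih (fun hv' => hv (mem_of_mem_erase hv')) hdeg'
  | delSave S f u w hu hw hadj hlt hleg h ih =>
    have hdeg' := card_filter_adj_erase_le hu hdeg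
    have huv : u ≠ v := fun huv => hv (huv ▸ hu)
    have hvw : v ≠ w := fun hvw => hv (hvw ▸ hw)
    refine .delSave _ f u w (mem_insert_of_mem hu) (mem_insert_of_mem hw) hadj hlt ?_ ?_ <;>
      rw [erase_insert_of_ne huv.symm]
    · refine forall_mem_insert .. |>.2 ⟨?_, hleg⟩
      simpa [hvw] using (Int.natCast_nonneg _).trans hdeg'
    · exact ih (fun hv' => hv (mem_of_mem_erase hv')) (by simpa [hvw] using hdeg')

theorem of_card_le (hf : ∀ x ∈ S, #S ≤ f x) : WeakDegenOn G S f := by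
  induction S using Finset.induction_on with
  | empty => exact .empty f
  | insert v S hv ih =>
    have hS := Nat.cast_le (α := ℤ) |>.2 (card_le_card (subset_insert v S))
    refine (ih fun x hx => hS.trans (hf x (mem_insert_of_mem hx))).insert hv ?_
    exact (Nat.cast_le.2 (card_filter_le S _)).trans (hS.trans (hf v (mem_insert_self v S)))

end WeakDegenOn

section

variable [Fintype V] {G : SimpleGraph V} {d e : ℕ}

theorem WeaklyDegenerate.mono (h : WeaklyDegenerate G d) (hde : d ≤ e) : WeaklyDegenerate G e :=
  WeakDegenOn.mono h fun _ _ => by exact_mod_cast hde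

variable (G) in
theorem weaklyDegenerate_weakDegeneracy : WeaklyDegenerate G (weakDegeneracy G) :=
  Nat.sInf_mem (s := {d | WeaklyDegenerate G d})
    ⟨Fintype.card V, WeakDegenOn.of_card_le fun _ _ => by simp⟩

theorem weakDegeneracy_le_iff : weakDegeneracy G ≤ d ↔ WeaklyDegenerate G d :=
  ⟨(weaklyDegenerate_weakDegeneracy G).mono, fun h => Nat.sInf_le h⟩

theorem weaklyDegenerate_of_deleteVerts_singleton [DecidableRel G.Adj] {v : V}
    [Fintype ((⊤ : G.Subgraph).deleteVerts {v}).verts]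
    (h : WeaklyDegenerate ((⊤ : G.Subgraph).deleteVerts {v}).coe d) (hv : G.degree v ≤ d) :
    WeaklyDegenerate G d := by
  have hind : ((⊤ : G.Subgraph).deleteVerts {v}).IsInduced := by
    intro a ha b hb hab
    simp_all
  let φ : ((⊤ : G.Subgraph).deleteVerts {v}).coe ↪g G := ⟨.subtype _, hind.adj.symm⟩
  have himage : univ.map φ.toEmbedding = univ.erase v := by
    ext x
    simp [φ]
  have hdeg : #((univ.erase v).filter (G.Adj v)) ≤ (d : ℤ) := by
    refine Nat.cast_le.2 ((card_le_card fun x => ?_).trans hv)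
    simp
  have := (himage ▸ WeakDegenOn.map φ (g := fun _ => (d : ℤ)) h).insert (notMem_erase v _)
    (by convert hdeg)
  rwa [insert_erase (mem_univ v)] at this

end

theorem minimal_weakDegeneracy_min_degree_general {V : Type*} [Fintype V] (G : SimpleGraph V)
    [DecidableRel G.Adj] (d : ℕ) (hwd : weakDegeneracy G = d)
    (hmin : ∀ H : G.Subgraph, H ≠ ⊤ → weakDegeneracy H.coe < d) :
    ∀ v, d ≤ G.degree v := by
  intro v
  by_contra! hdeg
  set H := (⊤ : G.Subgraph).deleteVerts {v}
  have hH : H ≠ ⊤ := fun hH => (by simp [H] : v ∉ H.verts) (by simp [hH])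
  have hGH : WeaklyDegenerate H.coe (d - 1) := weakDegeneracy_le_iff.1 (by have := hmin H hH; omega)
  have := weakDegeneracy_le_iff.2 (weaklyDegenerate_of_deleteVerts_singleton hGH (by omega))
  omega

/-- If `G` is a minimal graph of weak degeneracy `d ≥ 3` (every proper subgraph has weak
degeneracy less than `d`), then the minimum degree of `G` is at least `d`. -/
theorem minimal_weakDegeneracy_min_degree {V : Type*} [Fintype V] (G : SimpleGraph V)
    [DecidableRel G.Adj] (d : ℕ) (hd : 3 ≤ d) (hwd : weakDegeneracy G = d)
    (hmin : ∀ H : G.Subgraph, H ≠ ⊤ → weakDegeneracy H.coe < d) :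
    ∀ v, d ≤ G.degree v :=
  minimal_weakDegeneracy_min_degree_general G d hwd hmin

end WeakDeg
end

section
/- If G is a finite simple graph of maximum degree at most d and girth at least g (for g ≥ 3), then there exists a d-regular finite simple graph G* of girth at least g that contains G as a subgraph (i.e., G embeds into G*). -/
set_option linter.unusedSectionVars false
set_option linter.unreachableTactic false
set_option linter.unusedTactic false
set_option maxHeartbeats 1600000


open scoped Classical

namespace WeakDeg

variable {V : Type*}

section Aux


open SimpleGraph

variable {W : Type*}

private lemma walk_split {Γ : SimpleGraph W} {a b : W} :
    ∀ {s t : W} (w : Γ.Walk s t), w.edges.Nodup → s(a, b) ∈ w.edges →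
      ∃ (c d : W) (P : Γ.Walk s c) (Q : Γ.Walk d t),
        s(c, d) = s(a, b) ∧ P.length + Q.length + 1 = w.length ∧
          s(a, b) ∉ P.edges ∧ s(a, b) ∉ Q.edges := by
  intro s t w
  induction w with
  | nil => simp
  | @cons s v t h p ih =>
    intro hnd hmem
    rw [Walk.edges_cons] at hnd hmem
    rcases List.nodup_cons.mp hnd with ⟨hne, hnd'⟩
    rcases List.mem_cons.mp hmem with he | he
    · exact ⟨s, v, Walk.nil, p, he.symm, by simp, by simp, he ▸ hne⟩
    · obtain ⟨c, d, P, Q, h1, h2, h3, h4⟩ := ih hnd' he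
      refine ⟨c, d, Walk.cons h P, Q, h1, by simp only [Walk.length_cons]; omega, ?_, h4⟩
      rw [Walk.edges_cons]
      intro hx
      rcases List.mem_cons.mp hx with hx | hx
      · exact hne (hx ▸ he)
      · exact h3 hx

private lemma cycle_split {Γ : SimpleGraph W} {a b x : W} (C : Γ.Walk x x) (hC : C.IsCycle)
    (he : s(a, b) ∈ C.edges) :
    ∃ (R : Γ.Walk a b), R.length + 1 = C.length ∧ s(a, b) ∉ R.edges := by
  obtain ⟨c, d, P, Q, h1, h2, h3, h4⟩ := walk_split C hC.isTrail.edges_nodup he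
  rcases Sym2.eq_iff.mp h1 with ⟨rfl, rfl⟩ | ⟨rfl, rfl⟩
  · refine ⟨P.reverse.append Q.reverse, ?_, ?_⟩
    · simp only [Walk.length_append, Walk.length_reverse]; omega
    · intro hx
      rcases List.mem_append.mp (Walk.edges_append _ _ ▸ hx) with hx | hx
      · exact h3 (by simpa [Walk.edges_reverse] using hx)
      · exact h4 (by simpa [Walk.edges_reverse] using hx)
  · refine ⟨Q.append P, ?_, ?_⟩
    · simp only [Walk.length_append]; omega
    · intro hx
      rcases List.mem_append.mp (Walk.edges_append _ _ ▸ hx) with hx | hx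
      · exact h4 hx
      · exact h3 hx

private lemma edges_sup_edge {Γ : SimpleGraph W} {a b : W} {e : Sym2 W}
    (he : e ∈ (Γ ⊔ edge a b).edgeSet) (hne : e ≠ s(a, b)) : e ∈ Γ.edgeSet := by
  rw [edgeSet_sup] at he
  rcases he with h | h
  · exact h
  · exfalso
    rw [edge, edgeSet_fromEdgeSet] at h
    exact hne (by simpa using h.1)

private lemma egirth_sup_edge {Γ : SimpleGraph W} {g : ℕ} {a b : W}
    (hgirth : (g : ℕ∞) ≤ Γ.egirth) (hdist : (g : ℕ∞) ≤ Γ.edist a b + 1) :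
    (g : ℕ∞) ≤ (Γ ⊔ edge a b).egirth := by
  rw [le_egirth]
  intro x C hC
  by_cases he : s(a, b) ∈ C.edges
  · obtain ⟨R, hR, hRe⟩ := cycle_split C hC he
    have hsub : ∀ e ∈ R.edges, e ∈ Γ.edgeSet := fun e heR =>
      edges_sup_edge (R.edges_subset_edgeSet heR) (fun h => hRe (h ▸ heR))
    have h1 : Γ.edist a b ≤ (R.transfer Γ hsub).length := edist_le _
    rw [Walk.length_transfer] at h1
    calc (g : ℕ∞) ≤ Γ.edist a b + 1 := hdist
      _ ≤ (R.length : ℕ∞) + 1 := by exact_mod_cast add_le_add h1 le_rfl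
      _ = ((R.length + 1 : ℕ) : ℕ∞) := by push_cast; ring
      _ = (C.length : ℕ∞) := by rw [hR]
  · have hsub : ∀ e ∈ C.edges, e ∈ Γ.edgeSet := fun e heC =>
      edges_sup_edge (C.edges_subset_edgeSet heC) (fun h => he (h ▸ heC))
    have := le_egirth.mp hgirth x (C.transfer Γ hsub) (hC.transfer hsub)
    rwa [Walk.length_transfer] at this

private lemma edist_deleteEdge_ge {Γ : SimpleGraph W} {g : ℕ} {z z' : W} (hzz : Γ.Adj z z')
    (hgirth : (g : ℕ∞) ≤ Γ.egirth) :
    (g : ℕ∞) ≤ (Γ.deleteEdges {s(z, z')}).edist z z' + 1 := by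
  set Γ₁ := Γ.deleteEdges {s(z, z')} with hΓ₁
  rcases eq_or_ne (Γ₁.edist z z') ⊤ with htop | htop
  · rw [htop]; simp
  · obtain ⟨p, hp⟩ := exists_walk_of_edist_ne_top htop
    have hqp := p.bypass_isPath
    have hle := p.length_bypass_le
    set q := p.bypass with hq
    have hqe : s(z, z') ∉ q.edges := by
      intro h
      have := q.edges_subset_edgeSet h
      rw [hΓ₁, mem_edgeSet, deleteEdges_adj] at this
      exact this.2 rfl
    have hsub : ∀ e ∈ q.edges, e ∈ Γ.edgeSet := fun e heq =>
      (edgeSet_subset_edgeSet.2 (deleteEdges_le _)) (q.edges_subset_edgeSet heq)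
    have hq'path : (q.transfer Γ hsub).IsPath := hqp.transfer _
    have hcyc : (Walk.cons hzz.symm ((⟨q.transfer Γ hsub, hq'path⟩ : Γ.Path z z') : Γ.Walk z z')).IsCycle := by
      apply Path.cons_isCycle
      rw [Sym2.eq_swap]
      simpa [Walk.edges_transfer] using hqe
    have := le_egirth.mp hgirth z' _ hcyc
    simp only [Walk.length_cons, Walk.length_transfer] at this
    calc (g : ℕ∞) ≤ ((q.length + 1 : ℕ) : ℕ∞) := by exact_mod_cast this
      _ ≤ ((p.length + 1 : ℕ) : ℕ∞) := by exact_mod_cast Nat.add_le_add_right hle 1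
      _ = Γ₁.edist z z' + 1 := by rw [← hp]; push_cast; ring

private lemma edist_sup_edge_ge (Γ : SimpleGraph W) (a b s t : W) :
    min (Γ.edist s t)
      (min (Γ.edist s a + 1 + Γ.edist b t) (Γ.edist s b + 1 + Γ.edist a t))
      ≤ (Γ ⊔ edge a b).edist s t := by
  set Γ' := Γ ⊔ edge a b with hΓ'
  rcases eq_or_ne (Γ'.edist s t) ⊤ with htop | htop
  · rw [htop]; exact le_top
  · obtain ⟨p, hp⟩ := exists_walk_of_edist_ne_top htop
    have hqp := p.bypass_isPath
    have hle : p.bypass.length ≤ p.length := p.length_bypass_le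
    set q := p.bypass with hq
    by_cases heJ : s(a, b) ∈ q.edges
    case pos =>
      obtain ⟨c, d, P, Q, h1, h2, h3, h4⟩ := walk_split q hqp.isTrail.edges_nodup heJ
      have hPsub : ∀ e ∈ P.edges, e ∈ Γ.edgeSet := fun e heP =>
        edges_sup_edge (P.edges_subset_edgeSet heP) (fun h => h3 (h ▸ heP))
      have hQsub : ∀ e ∈ Q.edges, e ∈ Γ.edgeSet := fun e heQ =>
        edges_sup_edge (Q.edges_subset_edgeSet heQ) (fun h => h4 (h ▸ heQ))
      have hP : Γ.edist s c ≤ P.length := by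
        have := edist_le (P.transfer Γ hPsub); rwa [Walk.length_transfer] at this
      have hQ : Γ.edist d t ≤ Q.length := by
        have := edist_le (Q.transfer Γ hQsub); rwa [Walk.length_transfer] at this
      have hlen : ((P.length + Q.length + 1 : ℕ) : ℕ∞) ≤ Γ'.edist s t := by
        rw [h2, ← hp]; exact_mod_cast Nat.cast_le.mpr hle
      rcases Sym2.eq_iff.mp h1 with ⟨h5, h6⟩ | ⟨h5, h6⟩
      · refine le_trans (le_trans (min_le_right _ _) (min_le_left _ _)) ?_
        rw [← h5, ← h6]
        calc Γ.edist s c + 1 + Γ.edist d t ≤ (P.length : ℕ∞) + 1 + Q.length :=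
              add_le_add (add_le_add hP le_rfl) hQ
          _ = ((P.length + Q.length + 1 : ℕ) : ℕ∞) := by push_cast; ring
          _ ≤ Γ'.edist s t := hlen
      · refine le_trans (le_trans (min_le_right _ _) (min_le_right _ _)) ?_
        rw [← h5, ← h6]
        calc Γ.edist s c + 1 + Γ.edist d t ≤ (P.length : ℕ∞) + 1 + Q.length :=
              add_le_add (add_le_add hP le_rfl) hQ
          _ = ((P.length + Q.length + 1 : ℕ) : ℕ∞) := by push_cast; ring
          _ ≤ Γ'.edist s t := hlen
    case neg =>
      have hsub : ∀ e ∈ q.edges, e ∈ Γ.edgeSet := fun e heq =>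
        edges_sup_edge (q.edges_subset_edgeSet heq) (fun h => heJ (h ▸ heq))
      have : Γ.edist s t ≤ q.length := by
        have := edist_le (q.transfer Γ hsub); rwa [Walk.length_transfer] at this
      refine le_trans (min_le_left _ _) (le_trans this ?_)
      rw [← hp]; exact_mod_cast Nat.cast_le.mpr hle


open SimpleGraph

variable {W : Type*}

private lemma adj_sup_edge {Γ : SimpleGraph W} {a b : W} (x y : W) :
    (Γ ⊔ edge a b).Adj x y ↔ Γ.Adj x y ∨ ((x = a ∧ y = b ∨ x = b ∧ y = a) ∧ x ≠ y) := by
  rw [sup_adj, edge_adj]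

section deg
variable [Fintype W]

/-- instance-free degree -/
private noncomputable def ndeg (Γ : SimpleGraph W) (x : W) : ℕ := (Γ.neighborSet x).ncard

private lemma ndeg_eq_card_neighborFinset (Γ : SimpleGraph W) [DecidableRel Γ.Adj] (x : W) :
    ndeg Γ x = (Γ.neighborFinset x).card := by
  rw [ndeg, neighborFinset, Set.ncard_eq_toFinset_card']

private lemma ndeg_sup_edge_fst {Γ : SimpleGraph W} {a b : W} (hne : a ≠ b)
    (hna : ¬Γ.Adj a b) : ndeg (Γ ⊔ edge a b) a = ndeg Γ a + 1 := by
  have hnb : (Γ ⊔ edge a b).neighborSet a = insert b (Γ.neighborSet a) := by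
    ext y
    simp only [mem_neighborSet, adj_sup_edge, Set.mem_insert_iff]
    aesop
  rw [ndeg, ndeg, hnb, Set.ncard_insert_of_notMem (by simpa [mem_neighborSet] using hna)
    (Set.toFinite _)]

private lemma ndeg_sup_edge_snd {Γ : SimpleGraph W} {a b : W} (hne : a ≠ b)
    (hna : ¬Γ.Adj a b) : ndeg (Γ ⊔ edge a b) b = ndeg Γ b + 1 := by
  have hnb : (Γ ⊔ edge a b).neighborSet b = insert a (Γ.neighborSet b) := by
    ext y
    simp only [mem_neighborSet, adj_sup_edge, Set.mem_insert_iff]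
    aesop
  rw [ndeg, ndeg, hnb, Set.ncard_insert_of_notMem
    (by simpa [mem_neighborSet] using fun h => hna h.symm) (Set.toFinite _)]

private lemma ndeg_sup_edge_other {Γ : SimpleGraph W} {a b : W} {x : W} (hxa : x ≠ a)
    (hxb : x ≠ b) : ndeg (Γ ⊔ edge a b) x = ndeg Γ x := by
  have hnb : (Γ ⊔ edge a b).neighborSet x = Γ.neighborSet x := by
    ext y
    simp only [mem_neighborSet, adj_sup_edge]
    aesop
  rw [ndeg, ndeg, hnb]

private lemma ndeg_deleteEdge_fst {Γ : SimpleGraph W} {z z' : W} (h : Γ.Adj z z') :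
    ndeg (Γ.deleteEdges {s(z, z')}) z + 1 = ndeg Γ z := by
  have hnb : (Γ.deleteEdges {s(z, z')}).neighborSet z = Γ.neighborSet z \ {z'} := by
    ext y
    simp only [mem_neighborSet, deleteEdges_adj, Set.mem_diff, Set.mem_singleton_iff,
      Sym2.eq_iff]
    have := h.ne
    aesop
  rw [ndeg, ndeg, hnb, Set.ncard_diff_singleton_add_one (by simpa [mem_neighborSet] using h)
    (Set.toFinite _)]

private lemma ndeg_deleteEdge_snd {Γ : SimpleGraph W} {z z' : W} (h : Γ.Adj z z') :
    ndeg (Γ.deleteEdges {s(z, z')}) z' + 1 = ndeg Γ z' := by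
  have hnb : (Γ.deleteEdges {s(z, z')}).neighborSet z' = Γ.neighborSet z' \ {z} := by
    ext y
    simp only [mem_neighborSet, deleteEdges_adj, Set.mem_diff, Set.mem_singleton_iff,
      Sym2.eq_iff]
    have := h.ne
    aesop
  rw [ndeg, ndeg, hnb, Set.ncard_diff_singleton_add_one
    (by simpa [mem_neighborSet] using h.symm) (Set.toFinite _)]

private lemma ndeg_deleteEdge_other {Γ : SimpleGraph W} {z z' x : W} (hxz : x ≠ z)
    (hxz' : x ≠ z') : ndeg (Γ.deleteEdges {s(z, z')}) x = ndeg Γ x := by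
  have hnb : (Γ.deleteEdges {s(z, z')}).neighborSet x = Γ.neighborSet x := by
    ext y
    simp only [mem_neighborSet, deleteEdges_adj, Set.mem_singleton_iff, Sym2.eq_iff]
    aesop
  rw [ndeg, ndeg, hnb]

end deg

private lemma cycle_two_neighbors {Γ : SimpleGraph W} {x₀ x : W} {C : Γ.Walk x₀ x₀}
    (hC : C.IsCycle) (hx : x ∈ C.support) :
    ∃ y y' : W, y ≠ y' ∧ Γ.Adj x y ∧ Γ.Adj x y' := by
  have hC' : (C.rotate x hx).IsCycle := hC.rotate hx
  have h3 : 3 ≤ (C.rotate x hx).length := hC'.three_le_length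
  revert hC' h3
  generalize (C.rotate x hx) = D
  intro hC' h3
  cases D with
  | nil => exact absurd rfl hC'.ne_nil
  | @cons _ v _ h p =>
    cases hp : p.reverse with
    | nil =>
      exfalso
      have : p.length = 0 := by
        have := congrArg Walk.length hp
        simpa using this
      simp only [Walk.length_cons] at h3
      omega
    | @cons _ y' _ h' p'' =>
      refine ⟨v, y', ?_, h, h'⟩
      intro hvy
      have hnd := hC'.isTrail.edges_nodup
      rw [Walk.edges_cons, List.nodup_cons] at hnd
      apply hnd.1
      have : s(x, y') ∈ p.reverse.edges := by
        rw [hp, Walk.edges_cons]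
        exact List.mem_cons_self
      rw [Walk.edges_reverse, List.mem_reverse] at this
      rw [← hvy] at this
      exact this

section ball
variable [Fintype W]

private noncomputable def ball (Γ : SimpleGraph W) (u : W) (r : ℕ) : Finset W :=
  Finset.univ.filter (fun z => Γ.edist u z ≤ r)

private lemma mem_ball {Γ : SimpleGraph W} {u z : W} {r : ℕ} :
    z ∈ ball Γ u r ↔ Γ.edist u z ≤ r := by
  simp [ball]

private lemma ball_card {Γ : SimpleGraph W} {d : ℕ} (hdeg : ∀ z, ndeg Γ z ≤ d) (u : W) :
    ∀ r : ℕ, (ball Γ u r).card ≤ (d + 1) ^ r := by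
  intro r
  induction r with
  | zero =>
    have : ball Γ u 0 ⊆ {u} := by
      intro z hz
      rw [mem_ball] at hz
      have : Γ.edist u z = 0 := le_antisymm (by exact_mod_cast hz) zero_le
      rw [edist_eq_zero_iff] at this
      simp [this]
    simpa using Finset.card_le_card this
  | succ r ih =>
    have hsub : ball Γ u (r + 1) ⊆ (ball Γ u r).biUnion
        (fun y => insert y (Γ.neighborFinset y)) := by
      intro z hz
      rw [mem_ball] at hz
      rw [Finset.mem_biUnion]
      by_cases hz' : Γ.edist u z ≤ r
      · exact ⟨z, mem_ball.mpr hz', Finset.mem_insert_self _ _⟩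
      · push_neg at hz'
        have hze : Γ.edist u z = (r + 1 : ℕ) := le_antisymm (by exact_mod_cast hz) (by
          exact_mod_cast Order.add_one_le_of_lt hz')
        obtain ⟨p, hpl⟩ := exists_walk_of_edist_eq_coe hze
        cases hp : p.reverse with
        | nil =>
          exfalso
          have := congrArg Walk.length hp
          simp only [Walk.length_reverse, Walk.length_nil] at this
          omega
        | @cons _ y _ h q =>
          refine ⟨y, ?_, ?_⟩
          · rw [mem_ball]
            have hql : q.length = r := by
              have := congrArg Walk.length hp
              simp only [Walk.length_reverse, Walk.length_cons] at this
              omega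
            have := edist_le q.reverse
            rw [Walk.length_reverse, hql] at this
            exact this
          · rw [Finset.mem_insert, mem_neighborFinset]
            exact Or.inr h.symm
    calc (ball Γ u (r + 1)).card ≤ _ := Finset.card_le_card hsub
      _ ≤ ∑ y ∈ ball Γ u r, (insert y (Γ.neighborFinset y)).card := Finset.card_biUnion_le
      _ ≤ ∑ y ∈ ball Γ u r, (d + 1) := by
          refine Finset.sum_le_sum fun y _ => ?_
          calc (insert y (Γ.neighborFinset y)).card ≤ (Γ.neighborFinset y).card + 1 :=
                Finset.card_insert_le _ _
            _ ≤ d + 1 := by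
                have := hdeg y
                rw [ndeg_eq_card_neighborFinset] at this
                omega
      _ = (ball Γ u r).card * (d + 1) := by rw [Finset.sum_const, smul_eq_mul]
      _ ≤ (d + 1) ^ r * (d + 1) := Nat.mul_le_mul_right _ ih
      _ = (d + 1) ^ (r + 1) := by ring

end ball

section sums
variable [Fintype W]

private noncomputable def defT (Γ : SimpleGraph W) (d : ℕ) : ℕ := ∑ w : W, (d - ndeg Γ w)

private lemma sum_two_update {u z : W} (hne : u ≠ z) (f f' : W → ℕ)
    (hu : f' u + 1 = f u) (hz : f' z + 1 = f z) (hrest : ∀ x, x ≠ u → x ≠ z → f' x = f x) :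
    (∑ x : W, f' x) + 2 = ∑ x : W, f x := by
  have hzmem : z ∈ Finset.univ.erase u := Finset.mem_erase.mpr ⟨hne.symm, Finset.mem_univ z⟩
  rw [← Finset.add_sum_erase _ f (Finset.mem_univ u), ← Finset.add_sum_erase _ f' (Finset.mem_univ u),
      ← Finset.add_sum_erase _ f hzmem, ← Finset.add_sum_erase _ f' hzmem]
  have hS : ∑ x ∈ (Finset.univ.erase u).erase z, f' x = ∑ x ∈ (Finset.univ.erase u).erase z, f x := by
    refine Finset.sum_congr rfl fun x hx => ?_
    have hxz : x ≠ z := (Finset.mem_erase.mp hx).1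
    have hxu : x ≠ u := (Finset.mem_erase.mp (Finset.mem_of_mem_erase hx)).1
    exact hrest x hxu hxz
  rw [hS]
  omega

private lemma sum_one_update {u : W} (f f' : W → ℕ)
    (hu : f' u + 2 = f u) (hrest : ∀ x, x ≠ u → f' x = f x) :
    (∑ x : W, f' x) + 2 = ∑ x : W, f x := by
  rw [← Finset.add_sum_erase _ f (Finset.mem_univ u), ← Finset.add_sum_erase _ f' (Finset.mem_univ u)]
  have hS : ∑ x ∈ Finset.univ.erase u, f' x = ∑ x ∈ Finset.univ.erase u, f x :=
    Finset.sum_congr rfl fun x hx => hrest x (Finset.mem_erase.mp hx).1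
  rw [hS]
  omega

private lemma defT_eq_zero {Γ : SimpleGraph W} {d : ℕ} (hdeg : ∀ z, ndeg Γ z ≤ d)
    (h : defT Γ d = 0) : ∀ z, ndeg Γ z = d := by
  intro z
  have := Finset.sum_eq_zero_iff.mp h z (Finset.mem_univ z)
  have h2 := hdeg z
  omega

private lemma even_defT {Γ : SimpleGraph W} {d : ℕ} (hdeg : ∀ z, ndeg Γ z ≤ d)
    (hcard : Even (d * Fintype.card W)) : Even (defT Γ d) := by
  have h1 : defT Γ d + ∑ w : W, ndeg Γ w = d * Fintype.card W := by
    rw [defT, ← Finset.sum_add_distrib]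
    rw [Finset.sum_congr rfl (fun w _ => Nat.sub_add_cancel (hdeg w))]
    rw [Finset.sum_const, smul_eq_mul, Finset.card_univ, mul_comm]
  have h2 : Even (∑ w : W, ndeg Γ w) := by
    have hpt : ∀ w : W, ndeg Γ w = Γ.degree w := fun w => by
      rw [ndeg_eq_card_neighborFinset]
      exact Γ.card_neighborFinset_eq_degree w
    rw [Finset.sum_congr rfl (fun w _ => hpt w), sum_degrees_eq_twice_card_edges]
    exact even_two_mul _
  have h3 : Even (defT Γ d + ∑ w : W, ndeg Γ w) := h1 ▸ hcard
  exact (Nat.even_add.mp h3).mpr h2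

private lemma defT_two_update {Γ Γ' : SimpleGraph W} {d : ℕ} {u z : W} (hne : u ≠ z)
    (hu' : ndeg Γ' u = ndeg Γ u + 1) (hz' : ndeg Γ' z = ndeg Γ z + 1)
    (hud : ndeg Γ u < d) (hzd : ndeg Γ z < d)
    (hrest : ∀ x, x ≠ u → x ≠ z → ndeg Γ' x = ndeg Γ x) :
    defT Γ' d + 2 = defT Γ d := by
  refine sum_two_update hne (fun x => d - ndeg Γ x) (fun x => d - ndeg Γ' x) ?_ ?_ ?_
  · show d - ndeg Γ' u + 1 = d - ndeg Γ u
    rw [hu']; omega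
  · show d - ndeg Γ' z + 1 = d - ndeg Γ z
    rw [hz']; omega
  · intro x hxu hxz
    show d - ndeg Γ' x = d - ndeg Γ x
    rw [hrest x hxu hxz]

private lemma defT_one_update {Γ Γ' : SimpleGraph W} {d : ℕ} {u : W}
    (hu' : ndeg Γ' u = ndeg Γ u + 2) (hud : ndeg Γ u + 2 ≤ d)
    (hrest : ∀ x, x ≠ u → ndeg Γ' x = ndeg Γ x) :
    defT Γ' d + 2 = defT Γ d := by
  refine sum_one_update (u := u) (fun x => d - ndeg Γ x) (fun x => d - ndeg Γ' x) ?_ ?_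
  · show d - ndeg Γ' u + 2 = d - ndeg Γ u
    rw [hu']; omega
  · intro x hxu
    show d - ndeg Γ' x = d - ndeg Γ x
    rw [hrest x hxu]

end sums


open SimpleGraph

variable {V : Type*}

/-- padded graph: `G` plus, for each `v : V`, pendant vertices `(v, i)` for `i < δ v`,
plus `N` isolated spare vertices. -/
private def baseGraph (G : SimpleGraph V) (δ : V → ℕ) (d N : ℕ) :
    SimpleGraph (V ⊕ ((V × Fin d) ⊕ Fin N)) where
  Adj x y := match x, y with
    | Sum.inl u, Sum.inl v => G.Adj u v
    | Sum.inl u, Sum.inr (Sum.inl (v, i)) => u = v ∧ (i : ℕ) < δ v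
    | Sum.inr (Sum.inl (v, i)), Sum.inl u => u = v ∧ (i : ℕ) < δ v
    | _, _ => False
  symm := by
    refine ⟨?_⟩
    rintro (u | (⟨v, i⟩ | n)) (u' | (⟨v', i'⟩ | n')) h <;>
      first
        | exact h.symm
        | exact h
        | exact h.elim
  loopless := by
    refine ⟨?_⟩
    rintro (u | (⟨v, i⟩ | n)) h
    · exact G.irrefl h
    · exact h
    · exact h

variable {G : SimpleGraph V} {δ : V → ℕ} {d N : ℕ}

private lemma base_adj_inl_inl {u v : V} :
    (baseGraph G δ d N).Adj (Sum.inl u) (Sum.inl v) ↔ G.Adj u v := Iff.rfl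

private lemma base_adj_inl_pend {u v : V} {i : Fin d} :
    (baseGraph G δ d N).Adj (Sum.inl u) (Sum.inr (Sum.inl (v, i))) ↔
      u = v ∧ (i : ℕ) < δ v := Iff.rfl

private lemma base_adj_pend_inl {u v : V} {i : Fin d} :
    (baseGraph G δ d N).Adj (Sum.inr (Sum.inl (v, i))) (Sum.inl u) ↔
      u = v ∧ (i : ℕ) < δ v := Iff.rfl

private lemma base_adj_pend_pend {v v' : V} {i i' : Fin d} :
    ¬ (baseGraph G δ d N).Adj (Sum.inr (Sum.inl (v, i))) (Sum.inr (Sum.inl (v', i'))) :=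
  fun h => h

private lemma base_adj_pend_spare {v : V} {i : Fin d} {n : Fin N} :
    ¬ (baseGraph G δ d N).Adj (Sum.inr (Sum.inl (v, i))) (Sum.inr (Sum.inr n)) := fun h => h

private lemma base_adj_spare {n : Fin N} {y : V ⊕ ((V × Fin d) ⊕ Fin N)} :
    ¬ (baseGraph G δ d N).Adj (Sum.inr (Sum.inr n)) y := by
  rcases y with u | (⟨v, i⟩ | n') <;> exact fun h => h

private lemma card_filter_fin_lt {d k : ℕ} (h : k ≤ d) :
    ((Finset.univ : Finset (Fin d)).filter (fun i : Fin d => (i : ℕ) < k)).card = k := by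
  refine Finset.card_eq_of_bijective (fun i hi => ⟨i, lt_of_lt_of_le hi h⟩) ?_ ?_ ?_
  · intro a ha
    rw [Finset.mem_filter] at ha
    exact ⟨a, ha.2, by simp⟩
  · intro i hi
    rw [Finset.mem_filter]
    exact ⟨Finset.mem_univ _, hi⟩
  · intro i j hi hj hij
    simpa using congrArg (fun x : Fin d => (x : ℕ)) hij

section degrees
variable [Fintype V]

private lemma base_degree_inl [DecidableRel G.Adj] (v : V) (hδ : δ v ≤ d) :
    ndeg (baseGraph G δ d N) (Sum.inl v) = G.degree v + δ v := by
  have hnb : (baseGraph G δ d N).neighborFinset (Sum.inl v) =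
      (G.neighborFinset v).map ⟨Sum.inl, Sum.inl_injective⟩ ∪
        ((Finset.univ.filter (fun i : Fin d => (i : ℕ) < δ v)).map
          ⟨fun i => Sum.inr (Sum.inl (v, i)), by intro a b hab; simpa using hab⟩) := by
    ext y
    rcases y with u | (⟨v', i⟩ | n)
    · simp [mem_neighborFinset, base_adj_inl_inl]
    · simp only [mem_neighborFinset, base_adj_inl_pend, Finset.mem_union, Finset.mem_map,
        Finset.mem_filter, Function.Embedding.coeFn_mk]
      constructor
      · rintro ⟨rfl, h2⟩
        exact Or.inr ⟨i, ⟨Finset.mem_univ _, h2⟩, rfl⟩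
      · rintro (⟨a, -, h⟩ | ⟨j, ⟨-, hj⟩, h⟩)
        · exact absurd h (by simp)
        · have : v = v' ∧ j = i := by
            have := Sum.inl.inj (Sum.inr.inj h)
            exact ⟨congrArg Prod.fst this, congrArg Prod.snd this⟩
          obtain ⟨rfl, rfl⟩ := this
          exact ⟨rfl, hj⟩
    · simp only [mem_neighborFinset, Finset.mem_union, Finset.mem_map,
        Function.Embedding.coeFn_mk]
      constructor
      · exact fun h => absurd h.symm base_adj_spare
      · rintro (⟨a, -, h⟩ | ⟨j, -, h⟩) <;> cases h
  have hdisj : Disjoint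
      (((G.neighborFinset v).map ⟨Sum.inl, Sum.inl_injective⟩ : Finset (V ⊕ ((V × Fin d) ⊕ Fin N))))
      ((Finset.univ.filter (fun i : Fin d => (i : ℕ) < δ v)).map
        ⟨fun i => Sum.inr (Sum.inl (v, i)), by intro a b hab; simpa using hab⟩) := by
    rw [Finset.disjoint_left]
    rintro x hx hx'
    rw [Finset.mem_map] at hx hx'
    obtain ⟨a, -, rfl⟩ := hx
    obtain ⟨b, -, hb⟩ := hx'
    exact absurd hb (by simp)
  rw [ndeg_eq_card_neighborFinset, hnb, Finset.card_union_of_disjoint hdisj, Finset.card_map,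
    Finset.card_map, card_filter_fin_lt hδ]
  rfl

private lemma base_degree_pend (v : V) (i : Fin d) :
    ndeg (baseGraph G δ d N) (Sum.inr (Sum.inl (v, i))) ≤ 1 := by
  have hnb : (baseGraph G δ d N).neighborFinset (Sum.inr (Sum.inl (v, i))) ⊆ {Sum.inl v} := by
    intro y hy
    rw [mem_neighborFinset] at hy
    rcases y with u | (⟨v', i'⟩ | n)
    · rw [base_adj_pend_inl] at hy
      simp [hy.1]
    · exact absurd hy base_adj_pend_pend
    · exact absurd hy base_adj_pend_spare
  calc ndeg (baseGraph G δ d N) (Sum.inr (Sum.inl (v, i)))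
      = ((baseGraph G δ d N).neighborFinset (Sum.inr (Sum.inl (v, i)))).card :=
        ndeg_eq_card_neighborFinset _ _
    _ ≤ ({Sum.inl v} : Finset _).card := Finset.card_le_card hnb
    _ = 1 := Finset.card_singleton _

private lemma base_degree_spare (n : Fin N) :
    ndeg (baseGraph G δ d N) (Sum.inr (Sum.inr n)) = 0 := by
  have hnb : (baseGraph G δ d N).neighborFinset (Sum.inr (Sum.inr n)) = ∅ := by
    ext y
    simp only [mem_neighborFinset, Finset.notMem_empty, iff_false]
    exact base_adj_spare
  rw [ndeg_eq_card_neighborFinset, hnb, Finset.card_empty]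

end degrees

private lemma base_proj :
    ∀ {x y : V ⊕ ((V × Fin d) ⊕ Fin N)} (p : (baseGraph G δ d N).Walk x y) {a b : V},
      x = Sum.inl a → y = Sum.inl b → (∀ z ∈ p.support, ∃ v : V, z = Sum.inl v) →
      ∃ q : G.Walk a b, p.support = q.support.map Sum.inl ∧
        p.edges = q.edges.map (Sym2.map Sum.inl) ∧ p.length = q.length := by
  intro x y p
  induction p with
  | nil =>
    intro a b hx hy hsupp
    subst hx
    obtain rfl : a = b := Sum.inl.inj hy
    exact ⟨Walk.nil, by simp, by simp, by simp⟩
  | @cons x w y h p ih =>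
    intro a b hx hy hsupp
    obtain ⟨c, hc⟩ := hsupp w (by rw [Walk.support_cons]; exact List.mem_cons_of_mem _ p.start_mem_support)
    subst hx; subst hc
    have hadj : G.Adj a c := base_adj_inl_inl.mp h
    obtain ⟨q, h1, h2, h3⟩ := ih rfl hy
      (fun z hz => hsupp z (by rw [Walk.support_cons]; exact List.mem_cons_of_mem _ hz))
    refine ⟨Walk.cons hadj q, ?_, ?_, ?_⟩
    · rw [Walk.support_cons, Walk.support_cons, h1, List.map_cons]
    · rw [Walk.edges_cons, Walk.edges_cons, h2, List.map_cons, Sym2.map_pair_eq]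
    · rw [Walk.length_cons, Walk.length_cons, h3]

private lemma base_egirth {g : ℕ} (hG : (g : ℕ∞) ≤ G.egirth) :
    (g : ℕ∞) ≤ (baseGraph G δ d N).egirth := by
  rw [le_egirth]
  intro x C hC
  have hsupp : ∀ z ∈ C.support, ∃ v : V, z = Sum.inl v := by
    intro z hz
    obtain ⟨y, y', hyy, h1, h2⟩ := cycle_two_neighbors hC hz
    rcases z with u | (⟨v, i⟩ | n)
    · exact ⟨u, rfl⟩
    · exfalso
      have e1 : y = Sum.inl v := by
        rcases y with u | (⟨v', i'⟩ | n)
        · rw [base_adj_pend_inl] at h1; rw [h1.1]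
        · exact absurd h1 base_adj_pend_pend
        · exact absurd h1 base_adj_pend_spare
      have e2 : y' = Sum.inl v := by
        rcases y' with u | (⟨v', i'⟩ | n)
        · rw [base_adj_pend_inl] at h2; rw [h2.1]
        · exact absurd h2 base_adj_pend_pend
        · exact absurd h2 base_adj_pend_spare
      exact hyy (e1.trans e2.symm)
    · exact absurd h1 base_adj_spare
  obtain ⟨a, ha⟩ := hsupp x C.start_mem_support
  subst ha
  obtain ⟨q, h1, h2, h3⟩ := base_proj C rfl rfl hsupp
  have hlen : 3 ≤ C.length := hC.three_le_length
  have hqcyc : q.IsCycle := by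
    refine ⟨⟨⟨?_⟩, ?_⟩, ?_⟩
    · have := hC.isTrail.edges_nodup
      rw [h2] at this
      exact this.of_map
    · intro hnil
      rw [hnil] at h3
      simp only [Walk.length_nil] at h3
      omega
    · have := hC.support_nodup
      rw [h1, ← List.map_tail] at this
      exact this.of_map
  have := le_egirth.mp hG a q hqcyc
  rw [h3]
  exact this



open SimpleGraph

variable {V : Type*} [Fintype V]

private lemma main_rec {W : Type*} [Fintype W] {G : SimpleGraph V} {d g : ℕ}
    (hg3 : 3 ≤ g) (ι : V → W) (S : Finset W)
    (hS : 2 * (d + 1) ^ (g + 5) < S.card) (hSι : ∀ z ∈ S, ∀ v : V, z ≠ ι v) :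
    ∀ (k : ℕ) (Γ : SimpleGraph W),
      defT Γ d ≤ k →
      (g : ℕ∞) ≤ Γ.egirth → (∀ z, ndeg Γ z ≤ d) →
      (∀ u v : V, Γ.Adj (ι u) (ι v) ↔ G.Adj u v) →
      (∀ v : V, ndeg Γ (ι v) = d) → Even (defT Γ d) →
      ∃ Γ' : SimpleGraph W, (g : ℕ∞) ≤ Γ'.egirth ∧
        (∀ u v : V, Γ'.Adj (ι u) (ι v) ↔ G.Adj u v) ∧ (∀ z, ndeg Γ' z = d) := by
  intro k
  induction k with
  | zero =>
    intro Γ hk hJ1 hJ2 hJ3 hJ4 hJ5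
    exact ⟨Γ, hJ1, hJ3, defT_eq_zero hJ2 (Nat.le_zero.mp hk)⟩
  | succ k ih =>
    intro Γ hk hJ1 hJ2 hJ3 hJ4 hJ5
    by_cases h0 : defT Γ d = 0
    · exact ⟨Γ, hJ1, hJ3, defT_eq_zero hJ2 h0⟩
    have hex : ∃ u, ndeg Γ u < d := by
      by_contra hcon
      push_neg at hcon
      exact h0 (Finset.sum_eq_zero fun x _ => Nat.sub_eq_zero_of_le (hcon x))
    obtain ⟨u, hu⟩ := hex
    have hnotι : ∀ x, ndeg Γ x < d → ∀ v : V, x ≠ ι v := by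
      intro x hx v hxv
      rw [hxv, hJ4 v] at hx
      exact lt_irrefl _ hx
    by_cases hA : ∃ z, ndeg Γ z < d ∧ z ≠ u ∧ ¬(Γ.edist u z ≤ (g : ℕ∞))
    · -- Case A : add an edge between two far-apart deficient vertices
      obtain ⟨z, hzdef, hzu, hzfar⟩ := hA
      have hfar : (g : ℕ∞) < Γ.edist u z := not_le.mp hzfar
      have hnadj : ¬Γ.Adj u z := by
        intro h
        rw [← edist_eq_one_iff_adj] at h
        rw [h] at hfar
        have hg1 : g < 1 := by exact_mod_cast hfar
        omega
      have huz : u ≠ z := fun h => hzu h.symm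
      refine ih (Γ ⊔ edge u z) ?_ ?_ ?_ ?_ ?_ ?_
      case _ => -- defT ≤ k
        have h2 : defT (Γ ⊔ edge u z) d + 2 = defT Γ d :=
          defT_two_update huz (ndeg_sup_edge_fst huz hnadj) (ndeg_sup_edge_snd huz hnadj)
            hu hzdef (fun x hxu hxz => ndeg_sup_edge_other hxu hxz)
        omega
      case _ => -- girth
        refine egirth_sup_edge hJ1 ?_
        calc (g : ℕ∞) ≤ Γ.edist u z := le_of_lt hfar
          _ ≤ Γ.edist u z + 1 := le_self_add
      case _ => -- degrees ≤ d
        intro x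
        by_cases hxu : x = u
        · subst hxu; rw [ndeg_sup_edge_fst huz hnadj]; omega
        by_cases hxz : x = z
        · subst hxz; rw [ndeg_sup_edge_snd huz hnadj]; omega
        · rw [ndeg_sup_edge_other hxu hxz]; exact hJ2 x
      case _ => -- J3
        intro a b
        rw [adj_sup_edge]
        constructor
        · rintro (h | ⟨⟨h1, h2⟩ | ⟨h1, h2⟩, h3⟩)
          · exact (hJ3 a b).mp h
          · exact absurd h1.symm (hnotι u hu a)
          · exact absurd h1.symm (hnotι z hzdef a)
        · exact fun h => Or.inl ((hJ3 a b).mpr h)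
      case _ => -- J4
        intro v
        rw [ndeg_sup_edge_other (fun h => hnotι u hu v h.symm) (fun h => hnotι z hzdef v h.symm)]
        exact hJ4 v
      case _ => -- parity
        have h2 : defT (Γ ⊔ edge u z) d + 2 = defT Γ d :=
          defT_two_update huz (ndeg_sup_edge_fst huz hnadj) (ndeg_sup_edge_snd huz hnadj)
            hu hzdef (fun x hxu hxz => ndeg_sup_edge_other hxu hxz)
        rcases hJ5 with ⟨m, hm⟩
        exact ⟨m - 1, by omega⟩
    · -- Case B : switch a far-away edge
      push_neg at hA
      -- choose the second deficient vertex (possibly u itself)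
      obtain ⟨w, hwdef, hwu2⟩ :
          ∃ w, ndeg Γ w < d ∧ (w ≠ u ∨ ndeg Γ u + 2 ≤ d) := by
        by_cases hw : ∃ w, ndeg Γ w < d ∧ w ≠ u
        · obtain ⟨w, h1, h2⟩ := hw
          exact ⟨w, h1, Or.inl h2⟩
        · push_neg at hw
          refine ⟨u, hu, Or.inr ?_⟩
          have hTu : defT Γ d = d - ndeg Γ u := by
            rw [defT, ← Finset.add_sum_erase _ _ (Finset.mem_univ u)]
            have hz : ∑ x ∈ Finset.univ.erase u, (d - ndeg Γ x) = 0 := by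
              refine Finset.sum_eq_zero fun x hx => ?_
              have hxu : x ≠ u := (Finset.mem_erase.mp hx).1
              have h1 : ¬(ndeg Γ x < d) := fun hc => hxu (hw x hc)
              omega
            rw [hz]
            omega
          rcases hJ5 with ⟨m, hm⟩
          rw [hTu] at hm
          omega
      -- find a far spare vertex z
      have hfarz : ∃ z ∈ S, ¬(Γ.edist u z ≤ ((g + 4 : ℕ) : ℕ∞)) ∧
          ¬(Γ.edist w z ≤ ((g + 4 : ℕ) : ℕ∞)) := by
        by_contra hcon
        push_neg at hcon
        have hsub : S ⊆ ball Γ u (g + 4) ∪ ball Γ w (g + 4) := by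
          intro z hz
          rcases Classical.em (Γ.edist u z ≤ ((g + 4 : ℕ) : ℕ∞)) with h | h
          · exact Finset.mem_union_left _ (mem_ball.mpr h)
          · exact Finset.mem_union_right _ (mem_ball.mpr (hcon z hz (not_le.mp h)))
        have hc1 : S.card ≤ 2 * (d + 1) ^ (g + 4) := by
          calc S.card ≤ (ball Γ u (g + 4) ∪ ball Γ w (g + 4)).card := Finset.card_le_card hsub
            _ ≤ (ball Γ u (g + 4)).card + (ball Γ w (g + 4)).card := Finset.card_union_le _ _
            _ ≤ (d + 1) ^ (g + 4) + (d + 1) ^ (g + 4) :=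
                Nat.add_le_add (ball_card hJ2 u (g + 4)) (ball_card hJ2 w (g + 4))
            _ = 2 * (d + 1) ^ (g + 4) := by ring
        have hc2 : (d + 1) ^ (g + 4) ≤ (d + 1) ^ (g + 5) :=
          Nat.pow_le_pow_right (by omega) (by omega)
        omega
      obtain ⟨z, hzS, hzu, hzw⟩ := hfarz
      have hd1 : d ≥ 1 := by omega
      have hzfull : ndeg Γ z = d := by
        by_contra hzdef
        have hzd : ndeg Γ z < d := lt_of_le_of_ne (hJ2 z) hzdef
        have hzne : z ≠ u := by
          intro h
          subst h
          rw [SimpleGraph.edist_self] at hzu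
          exact hzu zero_le
        have h1 := hA z hzd hzne
        exact hzu (le_trans h1 (by exact_mod_cast Nat.le_add_right g 4))
      have hnbne : (Γ.neighborFinset z).Nonempty := by
        rw [← Finset.card_pos, ← ndeg_eq_card_neighborFinset, hzfull]
        omega
      obtain ⟨z', hz'⟩ := hnbne
      rw [mem_neighborFinset] at hz'
      -- distance facts
      have hdzu : ((g + 4 : ℕ) : ℕ∞) < Γ.edist u z := not_le.mp hzu
      have hdzw : ((g + 4 : ℕ) : ℕ∞) < Γ.edist w z := not_le.mp hzw
      have hne_uz : u ≠ z := by
        intro h; subst h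
        rw [SimpleGraph.edist_self] at hdzu
        exact absurd hdzu (by simp)
      have hne_wz : w ≠ z := by
        intro h; subst h
        rw [SimpleGraph.edist_self] at hdzw
        exact absurd hdzw (by simp)
      have hzz' : z ≠ z' := hz'.ne
      have hadj1 : Γ.edist z' z = 1 := edist_eq_one_iff_adj.mpr hz'.symm
      have hdz'u : ((g + 3 : ℕ) : ℕ∞) < Γ.edist u z' := by
        by_contra hc
        push_neg at hc
        have htri : Γ.edist u z ≤ Γ.edist u z' + Γ.edist z' z := SimpleGraph.edist_triangle
        rw [hadj1] at htri
        have : Γ.edist u z ≤ ((g + 4 : ℕ) : ℕ∞) := by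
          refine le_trans htri ?_
          calc Γ.edist u z' + 1 ≤ ((g + 3 : ℕ) : ℕ∞) + 1 := add_le_add hc le_rfl
            _ = ((g + 4 : ℕ) : ℕ∞) := by push_cast; ring
        exact absurd this hzu
      have hdz'w : ((g + 3 : ℕ) : ℕ∞) < Γ.edist w z' := by
        by_contra hc
        push_neg at hc
        have htri : Γ.edist w z ≤ Γ.edist w z' + Γ.edist z' z := SimpleGraph.edist_triangle
        rw [hadj1] at htri
        have : Γ.edist w z ≤ ((g + 4 : ℕ) : ℕ∞) := by
          refine le_trans htri ?_
          calc Γ.edist w z' + 1 ≤ ((g + 3 : ℕ) : ℕ∞) + 1 := add_le_add hc le_rfl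
            _ = ((g + 4 : ℕ) : ℕ∞) := by push_cast; ring
        exact absurd this hzw
      have hne_uz' : u ≠ z' := by
        intro h; subst h
        rw [SimpleGraph.edist_self] at hdz'u
        exact absurd hdz'u (by simp)
      have hne_wz' : w ≠ z' := by
        intro h; subst h
        rw [SimpleGraph.edist_self] at hdz'w
        exact absurd hdz'w (by simp)
      have hmono : Γ.deleteEdges {s(z, z')} ≤ Γ := deleteEdges_le _
      have hJ11 : (g : ℕ∞) ≤ (Γ.deleteEdges {s(z, z')}).egirth := le_trans hJ1 (egirth_anti hmono)
      have hedist1 : ∀ a b : W, Γ.edist a b ≤ (Γ.deleteEdges {s(z, z')}).edist a b :=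
        fun a b => edist_anti hmono
      have hg4 : ((g : ℕ) : ℕ∞) ≤ ((g + 4 : ℕ) : ℕ∞) := by exact_mod_cast Nat.le_add_right g 4
      have hg3' : ((g : ℕ) : ℕ∞) ≤ ((g + 3 : ℕ) : ℕ∞) := by exact_mod_cast Nat.le_add_right g 3
      have hdzz1 : (g : ℕ∞) ≤ (Γ.deleteEdges {s(z, z')}).edist z z' + 1 :=
        edist_deleteEdge_ge hz' hJ1
      have hJ12 : (g : ℕ∞) ≤ ((Γ.deleteEdges {s(z, z')}) ⊔ edge u z).egirth := by
        refine egirth_sup_edge hJ11 ?_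
        calc (g : ℕ∞) ≤ ((g + 4 : ℕ) : ℕ∞) := hg4
          _ ≤ Γ.edist u z := le_of_lt hdzu
          _ ≤ (Γ.deleteEdges {s(z, z')}).edist u z := hedist1 u z
          _ ≤ _ + 1 := le_self_add
      have hnadj1 : ¬(Γ.deleteEdges {s(z, z')}).Adj u z := by
        intro h
        have h2 : Γ.Adj u z := hmono h
        rw [← edist_eq_one_iff_adj] at h2
        rw [h2] at hdzu
        have : g + 4 < 1 := by exact_mod_cast hdzu
        omega
      have hnadjΓwz' : ¬Γ.Adj w z' := by
        intro h2
        rw [← edist_eq_one_iff_adj] at h2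
        rw [h2] at hdz'w
        have : g + 3 < 1 := by exact_mod_cast hdz'w
        omega
      have hnadj2 : ¬((Γ.deleteEdges {s(z, z')}) ⊔ edge u z).Adj w z' := by
        intro h
        rw [sup_adj] at h
        rcases h with h | h
        · exact hnadjΓwz' (hmono h)
        · rw [edge_adj] at h
          rcases h.1 with ⟨h1, h2⟩ | ⟨h1, h2⟩
          · exact hzz' h2.symm
          · exact hne_wz h1
      have hd2 : (g : ℕ∞) ≤ ((Γ.deleteEdges {s(z, z')}) ⊔ edge u z).edist w z' + 1 := by
        have hmin := edist_sup_edge_ge (Γ.deleteEdges {s(z, z')}) u z w z'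
        have h1 : (g : ℕ∞) ≤ (Γ.deleteEdges {s(z, z')}).edist w z' + 1 := by
          calc (g : ℕ∞) ≤ ((g + 3 : ℕ) : ℕ∞) := hg3'
            _ ≤ Γ.edist w z' := le_of_lt hdz'w
            _ ≤ (Γ.deleteEdges {s(z, z')}).edist w z' := hedist1 w z'
            _ ≤ _ + 1 := le_self_add
        have h2 : (g : ℕ∞) ≤
            ((Γ.deleteEdges {s(z, z')}).edist w u + 1 + (Γ.deleteEdges {s(z, z')}).edist z z')
              + 1 := by
          calc (g : ℕ∞) ≤ (Γ.deleteEdges {s(z, z')}).edist z z' + 1 := hdzz1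
            _ ≤ ((Γ.deleteEdges {s(z, z')}).edist w u + 1 +
                  (Γ.deleteEdges {s(z, z')}).edist z z') + 1 := by
                refine add_le_add ?_ le_rfl
                calc (Γ.deleteEdges {s(z, z')}).edist z z'
                    ≤ ((Γ.deleteEdges {s(z, z')}).edist w u + 1) +
                        (Γ.deleteEdges {s(z, z')}).edist z z' := le_add_self
                  _ = _ := rfl
        have h3 : (g : ℕ∞) ≤
            ((Γ.deleteEdges {s(z, z')}).edist w z + 1 + (Γ.deleteEdges {s(z, z')}).edist u z')
              + 1 := by
          calc (g : ℕ∞) ≤ ((g + 4 : ℕ) : ℕ∞) := hg4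
            _ ≤ Γ.edist w z := le_of_lt hdzw
            _ ≤ (Γ.deleteEdges {s(z, z')}).edist w z := hedist1 w z
            _ ≤ ((Γ.deleteEdges {s(z, z')}).edist w z + 1 +
                  (Γ.deleteEdges {s(z, z')}).edist u z') + 1 := by
                calc (Γ.deleteEdges {s(z, z')}).edist w z
                    ≤ (Γ.deleteEdges {s(z, z')}).edist w z +
                        (1 + (Γ.deleteEdges {s(z, z')}).edist u z' + 1) := le_self_add
                  _ = ((Γ.deleteEdges {s(z, z')}).edist w z + 1 +
                        (Γ.deleteEdges {s(z, z')}).edist u z') + 1 := by ring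
        refine le_trans ?_ (add_le_add hmin le_rfl)
        rw [← min_add_add_right, ← min_add_add_right]
        exact le_min h1 (le_min h2 h3)
      have hJ13 : (g : ℕ∞) ≤ (((Γ.deleteEdges {s(z, z')}) ⊔ edge u z) ⊔ edge w z').egirth :=
        egirth_sup_edge hJ12 hd2
      -- degree bookkeeping
      have hD1z := ndeg_deleteEdge_fst hz'
      have hD1z' := ndeg_deleteEdge_snd hz'
      have hD1o : ∀ x : W, x ≠ z → x ≠ z' →
          ndeg (Γ.deleteEdges {s(z, z')}) x = ndeg Γ x :=
        fun x h h' => ndeg_deleteEdge_other h h'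
      have hD2u := ndeg_sup_edge_fst hne_uz hnadj1
      have hD2z := ndeg_sup_edge_snd hne_uz hnadj1
      have hD2o : ∀ x : W, x ≠ u → x ≠ z →
          ndeg ((Γ.deleteEdges {s(z, z')}) ⊔ edge u z) x = ndeg (Γ.deleteEdges {s(z, z')}) x :=
        fun x h h' => ndeg_sup_edge_other h h'
      have hD3w := ndeg_sup_edge_fst hne_wz' hnadj2
      have hD3z' := ndeg_sup_edge_snd hne_wz' hnadj2
      have hD3o : ∀ x : W, x ≠ w → x ≠ z' →
          ndeg ((((Γ.deleteEdges {s(z, z')}) ⊔ edge u z)) ⊔ edge w z') x =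
            ndeg ((Γ.deleteEdges {s(z, z')}) ⊔ edge u z) x :=
        fun x h h' => ndeg_sup_edge_other h h'
      have hGz : ndeg ((((Γ.deleteEdges {s(z, z')}) ⊔ edge u z)) ⊔ edge w z') z = ndeg Γ z := by
        rw [hD3o z (Ne.symm hne_wz) hzz', hD2z]
        omega
      have hGz' : ndeg ((((Γ.deleteEdges {s(z, z')}) ⊔ edge u z)) ⊔ edge w z') z' =
          ndeg Γ z' := by
        rw [hD3z', hD2o z' (Ne.symm hne_uz') (Ne.symm hzz')]
        omega
      have hGo : ∀ x : W, x ≠ u → x ≠ w →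
          ndeg ((((Γ.deleteEdges {s(z, z')}) ⊔ edge u z)) ⊔ edge w z') x = ndeg Γ x := by
        intro x hxu hxw
        by_cases hxz : x = z
        · subst hxz; exact hGz
        by_cases hxz' : x = z'
        · subst hxz'; exact hGz'
        rw [hD3o x hxw hxz', hD2o x hxu hxz, hD1o x hxz hxz']
      have hJ3' : ∀ a b : V,
          ((((Γ.deleteEdges {s(z, z')}) ⊔ edge u z)) ⊔ edge w z').Adj (ι a) (ι b) ↔
            G.Adj a b := by
        intro a b
        rw [sup_adj, sup_adj, deleteEdges_adj]
        constructor
        · rintro ((⟨h, -⟩ | h) | h)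
          · exact (hJ3 a b).mp h
          · rw [edge_adj] at h
            rcases h.1 with ⟨h1, -⟩ | ⟨-, h1⟩
            · exact absurd h1.symm (hnotι u hu a)
            · exact absurd h1.symm (hnotι u hu b)
          · rw [edge_adj] at h
            rcases h.1 with ⟨h1, -⟩ | ⟨-, h1⟩
            · exact absurd h1.symm (hnotι w hwdef a)
            · exact absurd h1.symm (hnotι w hwdef b)
        · intro h
          refine Or.inl (Or.inl ⟨(hJ3 a b).mpr h, ?_⟩)
          rw [Set.mem_singleton_iff, Sym2.eq_iff]
          rintro (⟨h1, -⟩ | ⟨-, h1⟩)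
          · exact hSι z hzS a h1.symm
          · exact hSι z hzS b h1.symm
      by_cases hwu : w = u
      · subst hwu
        have hu2 : ndeg Γ w + 2 ≤ d := hwu2.resolve_left (fun h => h rfl)
        have hGu2 : ndeg ((((Γ.deleteEdges {s(z, z')}) ⊔ edge w z)) ⊔ edge w z') w =
            ndeg Γ w + 2 := by
          rw [hD3w, hD2u, hD1o w hne_uz hne_uz']
        have hT : defT ((((Γ.deleteEdges {s(z, z')}) ⊔ edge w z)) ⊔ edge w z') d + 2 =
            defT Γ d :=
          defT_one_update hGu2 hu2 (fun x hxu => hGo x hxu hxu)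
        refine ih _ ?_ hJ13 ?_ hJ3' ?_ ?_
        · omega
        · intro x
          by_cases hxu : x = w
          · subst hxu; rw [hGu2]; omega
          · rw [hGo x hxu hxu]; exact hJ2 x
        · intro v
          rw [hGo (ι v) (Ne.symm (hnotι w hwdef v)) (Ne.symm (hnotι w hwdef v))]
          exact hJ4 v
        · rcases hJ5 with ⟨m, hm⟩
          exact ⟨m - 1, by omega⟩
      · have hne_uw : u ≠ w := fun h => hwu h.symm
        have hGu1 : ndeg ((((Γ.deleteEdges {s(z, z')}) ⊔ edge u z)) ⊔ edge w z') u =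
            ndeg Γ u + 1 := by
          rw [hD3o u (Ne.symm hwu) hne_uz', hD2u, hD1o u hne_uz hne_uz']
        have hGw1 : ndeg ((((Γ.deleteEdges {s(z, z')}) ⊔ edge u z)) ⊔ edge w z') w =
            ndeg Γ w + 1 := by
          rw [hD3w, hD2o w hwu hne_wz, hD1o w hne_wz hne_wz']
        have hT : defT ((((Γ.deleteEdges {s(z, z')}) ⊔ edge u z)) ⊔ edge w z') d + 2 =
            defT Γ d :=
          defT_two_update hne_uw hGu1 hGw1 hu hwdef hGo
        refine ih _ ?_ hJ13 ?_ hJ3' ?_ ?_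
        · omega
        · intro x
          by_cases hxu : x = u
          · subst hxu; rw [hGu1]; omega
          by_cases hxw : x = w
          · subst hxw; rw [hGw1]; omega
          · rw [hGo x hxu hxw]; exact hJ2 x
        · intro v
          rw [hGo (ι v) (Ne.symm (hnotι u hu v)) (Ne.symm (hnotι w hwdef v))]
          exact hJ4 v
        · rcases hJ5 with ⟨m, hm⟩
          exact ⟨m - 1, by omega⟩


open SimpleGraph

end Aux

open SimpleGraph in
/-- Every graph of maximum degree at most `d` and girth at least `g ≥ 3` embeds into a
`d`-regular finite graph of girth at least `g`. -/
theorem embeds_into_regular_of_girth {V : Type*} [Fintype V] (G : SimpleGraph V)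
    [DecidableRel G.Adj] (d g : ℕ) (hg : 3 ≤ g) (hdeg : ∀ v, G.degree v ≤ d)
    (hgirth : (g : ℕ∞) ≤ G.girth) :
    ∃ (W : Type) (H : SimpleGraph W), Finite W ∧ (∀ w, (H.neighborSet w).ncard = d) ∧
      (g : ℕ∞) ≤ H.girth ∧ Nonempty (G ↪g H) := by
  classical
  -- girth facts about G
  have hge : (g : ℕ∞) ≤ G.egirth :=
    le_trans hgirth (by exact_mod_cast ENat.coe_toNat_le_self G.egirth)
  have hgnat : g ≤ G.girth := by exact_mod_cast hgirth
  have hnacyc : ¬G.IsAcyclic := by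
    intro h
    rw [← girth_eq_zero] at h
    omega
  -- G has a cycle, so d ≥ 2
  obtain ⟨a₀, C₀, hC₀⟩ : ∃ (a : V) (C : G.Walk a a), C.IsCycle := by
    by_contra hcon
    push_neg at hcon
    exact hnacyc fun v c hc => hcon v c hc
  have hd2 : 2 ≤ d := by
    obtain ⟨y, y', hyy, h1, h2⟩ := cycle_two_neighbors hC₀ C₀.start_mem_support
    have : 1 < G.degree a₀ := by
      rw [← card_neighborFinset_eq_degree]
      exact Finset.one_lt_card.mpr ⟨y, by simpa [mem_neighborFinset] using h1, y',
        by simpa [mem_neighborFinset] using h2, hyy⟩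
    have := hdeg a₀
    omega
  -- the padded graph
  set N : ℕ := 2 * (d + 1) ^ (g + 5) + 2 with hN
  set δ : V → ℕ := fun v => d - G.degree v with hδ
  set Γ₀ : SimpleGraph (V ⊕ ((V × Fin d) ⊕ Fin N)) := baseGraph G δ d N with hΓ₀
  set S : Finset (V ⊕ ((V × Fin d) ⊕ Fin N)) :=
    (Finset.univ : Finset (Fin N)).map
      ⟨fun n => Sum.inr (Sum.inr n), by intro a b hab; simpa using hab⟩ with hS
  have hScard : S.card = N := by rw [hS, Finset.card_map, Finset.card_univ, Fintype.card_fin]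
  have hSbig : 2 * (d + 1) ^ (g + 5) < S.card := by rw [hScard]; omega
  have hSι : ∀ z ∈ S, ∀ v : V, z ≠ Sum.inl v := by
    intro z hz v
    rw [hS, Finset.mem_map] at hz
    obtain ⟨n, -, rfl⟩ := hz
    simp
  -- invariants of the padded graph
  have hJ1 : (g : ℕ∞) ≤ Γ₀.egirth := base_egirth hge
  have hJ4 : ∀ v : V, ndeg Γ₀ (Sum.inl v) = d := by
    intro v
    rw [hΓ₀, base_degree_inl v (Nat.sub_le d _)]
    have := hdeg v
    show G.degree v + (d - G.degree v) = d
    omega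
  have hJ2 : ∀ x, ndeg Γ₀ x ≤ d := by
    rintro (v | (⟨v, i⟩ | n))
    · rw [hJ4 v]
    · exact le_trans (base_degree_pend v i) (by omega)
    · rw [hΓ₀, base_degree_spare n]
      omega
  have hJ3 : ∀ u v : V, Γ₀.Adj (Sum.inl u) (Sum.inl v) ↔ G.Adj u v :=
    fun u v => base_adj_inl_inl
  have hJ5 : Even (defT Γ₀ d) := by
    refine even_defT hJ2 ?_
    have hcw : Fintype.card (V ⊕ ((V × Fin d) ⊕ Fin N)) =
        Fintype.card V + (Fintype.card V * d + N) := by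
      simp [Fintype.card_sum, Fintype.card_prod, Fintype.card_fin]
    rw [hcw]
    have h1 : d * (Fintype.card V + (Fintype.card V * d + N)) =
        Fintype.card V * (d * (d + 1)) + d * N := by ring
    rw [h1]
    have hEN : Even N := by rw [hN]; exact ⟨(d + 1) ^ (g + 5) + 1, by ring⟩
    exact ((Nat.even_mul_succ_self d).mul_left _).add (hEN.mul_left d)
  -- run the main recursion
  obtain ⟨Γf, hf1, hf3, hf2⟩ :=
    main_rec hg Sum.inl S hSbig hSι (defT Γ₀ d) Γ₀ le_rfl hJ1 hJ2 hJ3 hJ4 hJ5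
  -- transport to a `Type 0`
  set n : ℕ := Fintype.card (V ⊕ ((V × Fin d) ⊕ Fin N)) with hn
  set e : Fin n ≃ (V ⊕ ((V × Fin d) ⊕ Fin N)) := (Fintype.equivFin _).symm with he
  refine ⟨Fin n, Γf.comap e, Finite.of_fintype _, ?_, ?_, ?_⟩
  · -- degrees
    intro x
    have hset : (Γf.comap e).neighborSet x = e.symm '' (Γf.neighborSet (e x)) := by
      ext y
      simp only [mem_neighborSet, comap_adj, Set.mem_image]
      constructor
      · intro h
        exact ⟨e y, h, by simp⟩
      · rintro ⟨w, hw, rfl⟩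
        simpa using hw
    rw [hset, Set.ncard_image_of_injective _ e.symm.injective]
    exact hf2 (e x)
  · -- girth
    have hcyc : (g : ℕ∞) ≤ (Γf.comap e).egirth := by
      rw [le_egirth]
      intro x C hC
      have hC' : (C.map (SimpleGraph.Hom.comap e Γf)).IsCycle :=
        (Walk.map_isCycle_iff_of_injective (by
          intro a b hab
          simpa using hab)).mpr hC
      have := le_egirth.mp hf1 _ _ hC'
      rwa [Walk.length_map] at this
    -- the embedding, and hence a cycle in the new graph
    have hembAdj : ∀ a b : V,
        (Γf.comap e).Adj (e.symm (Sum.inl a)) (e.symm (Sum.inl b)) ↔ G.Adj a b := by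
      intro a b
      rw [comap_adj]
      simp only [Equiv.apply_symm_apply]
      exact hf3 a b
    have hnot : ¬(Γf.comap e).IsAcyclic := by
      intro hacyc
      have hmap : ∀ a b : V, a ≠ b → e.symm (Sum.inl a) ≠ e.symm (Sum.inl b) := by
        intro a b hab h
        exact hab (by simpa using h)
      -- map the cycle C₀ over
      have hinj : Function.Injective (fun v : V => e.symm (Sum.inl v)) := by
        intro a b h
        simpa using h
      have : ((C₀.map ⟨fun v => e.symm (Sum.inl v),
          fun {a b} hab => (hembAdj a b).mpr hab⟩)).IsCycle :=
        (Walk.map_isCycle_iff_of_injective hinj).mpr hC₀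
      exact hacyc _ this
    have htop : (Γf.comap e).egirth ≠ ⊤ := fun h => hnot (egirth_eq_top.mp h)
    have : g ≤ (Γf.comap e).girth := by
      have := ENat.toNat_le_toNat hcyc htop
      rwa [ENat.toNat_coe] at this
    exact_mod_cast this
  · -- the embedding
    refine ⟨⟨⟨fun v => e.symm (Sum.inl v), ?_⟩, ?_⟩⟩
    · intro a b h
      simpa using h
    · intro a b
      rw [comap_adj]
      show Γf.Adj (e (e.symm (Sum.inl a))) (e (e.symm (Sum.inl b))) ↔ G.Adj a b
      rw [Equiv.apply_symm_apply, Equiv.apply_symm_apply]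
      exact hf3 a b



end WeakDeg
end

section
/- Let G be a finite simple graph of maximum degree at most d and let (≺, save) be a legal removal scheme on G. Then G is weakly (d − gap(≺, save))-degenerate. -/
open scoped Classical

namespace WeakDeg

variable {V : Type*}

/-!
Remove the vertices in `≺`-order, applying `DelSave(u, save u)` when `save u` is defined and
`Delete(u)` otherwise, starting from the constant value `k = d - gap`. When the vertices before
`u` are gone, the value of a remaining vertex `x` is `k` minus the number of removed neighbours
of `x` that did not save it (`chargingNeighbors S x` for the set `S` of remaining vertices).
Such neighbours are neither later than `x` nor saving into `x`, so there are at most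
`deg x - gap(x) ≤ k` of them and all values stay nonnegative. Comparing the values of `u` and
`save u` at that moment, the legality of the scheme is exactly the condition `f(save u) < f(u)`
that `DelSave` requires.
-/

section ChargingNeighbors

variable {G : SimpleGraph V} {save : V → Option V}

variable (G save) in
def chargingNeighbors (S : Finset V) (x : V) : Set V :=
  {v | G.Adj x v ∧ v ∉ S ∧ save v ≠ some x}

theorem ncard_chargingNeighbors_erase [Finite V] [DecidableEq V] {S : Finset V} {u : V}
    (hu : u ∈ S) (x : V) :
    (chargingNeighbors G save (S.erase u) x).ncard =
      (chargingNeighbors G save S x).ncard + if G.Adj u x ∧ save u ≠ some x then 1 else 0 := by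
  split_ifs with h
  · rw [← Set.ncard_insert_of_notMem fun hu' => hu'.2.1 hu]
    congr 1
    ext v
    rcases eq_or_ne v u with rfl | hvu <;> simp [chargingNeighbors, h.1.symm, h.2, *]
  · congr 1
    ext v
    rcases eq_or_ne v u with rfl | hvu <;> simp [chargingNeighbors, *]
    tauto

variable [LinearOrder V]

variable (G save) in
noncomputable def gapAt (u : V) : ℕ :=
  {v | G.Adj u v ∧ u < v}.ncard + {v | G.Adj u v ∧ save v = some u}.ncard

theorem chargingNeighbors_eq_of_isLeast {S : Finset V} (hS : IsUpperSet (S : Set V)) {u : V}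
    (hu : IsLeast (S : Set V) u) (x : V) :
    chargingNeighbors G save S x = {v | G.Adj x v ∧ v < u ∧ save v ≠ some x} := by
  have hmem : ∀ v, v ∉ S ↔ v < u := fun v => by
    rw [← not_le, not_iff_not]
    exact ⟨fun hv => hu.2 hv, fun h => hS h hu.1⟩
  ext v
  simp only [chargingNeighbors, Set.mem_ofPred_eq, hmem]

theorem ncard_chargingNeighbors_add_gapAt_le [Finite V] (hsave : ∀ u w, save u = some w → u < w)
    {S : Finset V} (hS : IsUpperSet (S : Set V)) {x : V} (hx : x ∈ S) :
    (chargingNeighbors G save S x).ncard + gapAt G save x ≤ (G.neighborSet x).ncard := by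
  have hAB : Disjoint (chargingNeighbors G save S x) {v | G.Adj x v ∧ x < v} :=
    Set.disjoint_left.2 fun _ ⟨_, hvS, _⟩ ⟨_, hxv⟩ => hvS (hS hxv.le hx)
  have hAC : Disjoint (chargingNeighbors G save S x) {v | G.Adj x v ∧ save v = some x} :=
    Set.disjoint_left.2 fun _ ⟨_, _, hv⟩ ⟨_, hv'⟩ => hv hv'
  have hBC : Disjoint {v | G.Adj x v ∧ x < v} {v | G.Adj x v ∧ save v = some x} :=
    Set.disjoint_left.2 fun v ⟨_, hxv⟩ ⟨_, hv⟩ => (hsave v x hv).not_gt hxv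
  rw [gapAt, ← Set.ncard_union_eq hBC,
    ← Set.ncard_union_eq (Set.disjoint_union_right.2 ⟨hAB, hAC⟩)]
  exact Set.ncard_le_ncard <|
    Set.union_subset (fun _ hv => hv.1) (Set.union_subset (fun _ hv => hv.1) fun _ hv => hv.1)

theorem weakDegenOn_of_isUpperSet [Finite V]
    (hsave : ∀ u w, save u = some w → G.Adj u w ∧ u < w)
    (hlegal : ∀ u w, save u = some w →
      {v | G.Adj u v ∧ v < u ∧ save v ≠ some u}.ncard <
        {v | G.Adj w v ∧ v < u ∧ save v ≠ some w}.ncard)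
    {k : ℕ} (hk : ∀ x, (G.neighborSet x).ncard ≤ k + gapAt G save x)
    (S : Finset V) (hS : IsUpperSet (S : Set V)) :
    WeakDegenOn G S fun x => k - (chargingNeighbors G save S x).ncard := by
  induction S using Finset.strongInduction with
  | H S ih =>
  -- `WeakDegenOn` erases vertices with the classical decidable equality, not the order's.
  let : DecidableEq V := Classical.decEq V
  obtain rfl | hne := S.eq_empty_or_nonempty
  · exact .empty _
  set u := S.min' hne
  have hu : IsLeast (S : Set V) u := S.isLeast_min' hne
  have hS' : IsUpperSet (S.erase u : Set V) := by
    rw [Finset.coe_erase]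
    exact hS.erase fun b hb hbu => le_antisymm hbu (hu.2 hb)
  have hrest := ih _ (S.erase_ssubset hu.1) hS'
  have hnonneg (v : V) (hv : v ∈ S.erase u) :
      (0 : ℤ) ≤ k - (chargingNeighbors G save (S.erase u) v).ncard := by
    have := ncard_chargingNeighbors_add_gapAt_le (G := G) (fun a b h => (hsave a b h).2) hS' hv
    have := hk v
    omega
  have hstep (v : V) : (k : ℤ) - (chargingNeighbors G save (S.erase u) v).ncard =
      if G.Adj u v ∧ save u ≠ some v then (k : ℤ) - (chargingNeighbors G save S v).ncard - 1
      else (k : ℤ) - (chargingNeighbors G save S v).ncard := by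
    rw [ncard_chargingNeighbors_erase hu.1]
    split_ifs <;> push_cast <;> ring
  cases hsu : save u with
  | none =>
    simp only [hsu, ne_eq, reduceCtorEq, not_false_eq_true, and_true] at hstep
    refine .delete S _ u hu.1 (fun v hv => ?_) ?_
    · simpa [hstep] using hnonneg v hv
    · simpa [hstep] using hrest
  | some w =>
    obtain ⟨huw, hlt⟩ := hsave u w hsu
    simp only [hsu, ne_eq, Option.some.injEq, eq_comm (a := w)] at hstep
    refine .delSave S _ u w hu.1 (hS hlt.le hu.1) huw ?_ (fun v hv => ?_) ?_
    · have := hlegal u w hsu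
      simp only [chargingNeighbors_eq_of_isLeast hS hu]
      omega
    · simpa [hstep] using hnonneg v hv
    · simpa [hstep] using hrest

end ChargingNeighbors

/-- If `G` has maximum degree at most `d` and `(≺, save)` is a legal removal scheme on `G`,
then `G` is weakly `(d - gap(≺, save))`-degenerate. Here a removal scheme is a strict linear
order `≺` on the vertices together with a partial function `save` sending a vertex `u` to a
neighbor `save u` with `u ≺ save u`; it is legal if whenever `save u = some w`, the number of
neighbors `v` of `u` with `v ≺ u` and `save v ≠ u` is strictly less than the number of
neighbors `v` of `w` with `v ≺ u` and `save v ≠ w`; and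
`gap(u) = #{v ∈ N(u) : u ≺ v} + #{v ∈ N(u) : save v = u}`,
`gap(≺, save) = min over u of gap(u)`. -/
theorem weaklyDegenerate_of_removal_scheme {V : Type*} [Fintype V] (G : SimpleGraph V)
    [DecidableRel G.Adj] (d : ℕ) (hdeg : ∀ v, G.degree v ≤ d)
    (lt : V → V → Prop) (hlt : IsStrictTotalOrder V lt)
    (save : V → Option V)
    (hscheme : ∀ u w, save u = some w → G.Adj u w ∧ lt u w)
    (hlegal : ∀ u w, save u = some w →
      {v | G.Adj u v ∧ lt v u ∧ save v ≠ some u}.ncard <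
        {v | G.Adj w v ∧ lt v u ∧ save v ≠ some w}.ncard) :
    WeaklyDegenerate G (d - sInf (Set.range fun u : V =>
      {v | G.Adj u v ∧ lt u v}.ncard + {v | G.Adj u v ∧ save v = some u}.ncard)) := by
  let := linearOrderOfSTO lt
  set gap := sInf (Set.range (gapAt G save))
  have hk (x : V) : (G.neighborSet x).ncard ≤ (d - gap) + gapAt G save x := by
    have : gap ≤ gapAt G save x := Nat.sInf_le ⟨x, rfl⟩
    have := hdeg x
    rw [← G.card_neighborFinset_eq_degree, ← Set.ncard_coe_finset, G.coe_neighborFinset] at this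
    omega
  have := weakDegenOn_of_isUpperSet hscheme hlegal hk Finset.univ (by simp [isUpperSet_univ])
  simp only [chargingNeighbors, Finset.mem_univ, not_true_eq_false, false_and, and_false,
    Set.ofPred_false, Set.ncard_empty, Nat.cast_zero, sub_zero] at this
  exact this

end WeakDeg
end
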